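/- arXiv:cs/0212008 — 6 statements merged into one kernel-verified Lean document; each statement's English description precedes it below -/
import Mathlib

section
/- Let X be an m-by-N real matrix, e the all-ones vector in R^N, x̄ = (1/N) X e, and let σ_1 ≥ σ_2 ≥ … ≥ σ_{min(m,N)} be the singular values of the centered matrix X − x̄ e^T, with Q_d the m-by-d matrix of left singular vectors and V_d the N-by-d matrix of right singular vectors corresponding to the d largest singular values. Then for every c ∈ R^m, every m-by-d matrix U, and every d-by-N matrix T, one has ‖X − (c e^T + U T)‖_F^2 ≥ Σ_{j=d+1}^{min(m,N)} σ_j^2, and equality is attained at c = x̄, U = Q_d, and T = diag(σ_1,…,σ_d) V_d^T. -/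
open Matrix

/-- Frobenius norm of a real matrix. -/
noncomputable def frob {α β : Type*} [Fintype α] [Fintype β] (A : Matrix α β ℝ) : ℝ :=
  Real.sqrt (∑ i, ∑ j, (A i j) ^ 2)

set_option linter.unusedSectionVars false
set_option maxHeartbeats 1000000

section Aux
open Module

namespace EY

variable {α β γ : Type*} [Fintype α] [Fintype β] [Fintype γ] [DecidableEq α] [DecidableEq β] [DecidableEq γ]

def frobSq (A : Matrix α β ℝ) : ℝ := ∑ i, ∑ j, (A i j) ^ 2

lemma frobSq_nonneg (A : Matrix α β ℝ) : 0 ≤ frobSq A :=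
  Finset.sum_nonneg fun _ _ => Finset.sum_nonneg fun _ _ => sq_nonneg _

lemma frob_sq (A : Matrix α β ℝ) : frob A ^ 2 = frobSq A :=
  Real.sq_sqrt (frobSq_nonneg A)

def inn (A B : Matrix α β ℝ) : ℝ := ∑ i, ∑ j, A i j * B i j

lemma inn_eq_trace (A B : Matrix α β ℝ) : inn A B = Matrix.trace (Aᵀ * B) := by
  simp only [inn, Matrix.trace, Matrix.diag, Matrix.mul_apply, Matrix.transpose_apply]
  exact Finset.sum_comm

lemma frobSq_eq_inn (A : Matrix α β ℝ) : frobSq A = inn A A := by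
  simp [frobSq, inn, sq]

lemma frobSq_eq_trace (A : Matrix α β ℝ) : frobSq A = Matrix.trace (Aᵀ * A) := by
  rw [frobSq_eq_inn, inn_eq_trace]

lemma frobSq_sub (A B : Matrix α β ℝ) :
    frobSq (A - B) = frobSq A - 2 * inn A B + frobSq B := by
  simp only [frobSq, inn, Matrix.sub_apply, sub_sq, Finset.sum_add_distrib,
    Finset.sum_sub_distrib, Finset.mul_sum, mul_assoc]

lemma inn_trans (A B : Matrix α β ℝ) : Matrix.trace (Aᵀ * B) = Matrix.trace (Bᵀ * A) := by
  rw [← Matrix.trace_transpose (Aᵀ * B), Matrix.transpose_mul, Matrix.transpose_transpose]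


lemma frobSq_mul_orth_left (Q : Matrix α α ℝ) (hQ : Qᵀ * Q = 1) (A : Matrix α β ℝ) :
    frobSq (Q * A) = frobSq A := by
  rw [frobSq_eq_trace, frobSq_eq_trace, Matrix.transpose_mul,
    Matrix.mul_assoc Aᵀ Qᵀ (Q * A), ← Matrix.mul_assoc Qᵀ Q A, hQ, Matrix.one_mul]

lemma frobSq_mul_orth_right (V : Matrix β β ℝ) (hV : Vᵀ * V = 1) (A : Matrix α β ℝ) :
    frobSq (A * Vᵀ) = frobSq A := by
  rw [frobSq_eq_trace, frobSq_eq_trace, Matrix.transpose_mul, Matrix.transpose_transpose,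
    Matrix.trace_mul_comm, Matrix.mul_assoc, ← Matrix.mul_assoc Vᵀ V Aᵀ,
    hV, Matrix.one_mul, Matrix.trace_mul_comm]

lemma proj_le (M : Matrix α β ℝ) (P : Matrix β β ℝ) (hs : Pᵀ = P) (hi : P * P = P) :
    frobSq (M * P) ≤ frobSq M := by
  have h1 : inn M (M * P) = frobSq (M * P) := by
    rw [inn_eq_trace, frobSq_eq_trace, Matrix.transpose_mul, hs,
      Matrix.mul_assoc P Mᵀ (M * P), Matrix.trace_mul_comm P (Mᵀ * (M * P)),
      Matrix.mul_assoc Mᵀ (M * P) P, Matrix.mul_assoc M P P, hi]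
  have key := frobSq_sub M (M * P)
  rw [h1] at key
  have := frobSq_nonneg (M - M * P)
  linarith

lemma orth_expand (W : Matrix α γ ℝ) (hW : Wᵀ * W = 1) (S : Matrix α β ℝ) (R : Matrix γ β ℝ) :
    frobSq (S - W * R) = frobSq S - frobSq (Wᵀ * S) + frobSq (Wᵀ * S - R) := by
  have h1 : frobSq (W * R) = frobSq R := by
    rw [frobSq_eq_trace, frobSq_eq_trace, Matrix.transpose_mul,
      Matrix.mul_assoc Rᵀ Wᵀ (W * R), ← Matrix.mul_assoc Wᵀ W R, hW, Matrix.one_mul]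
  have h2 : inn S (W * R) = inn (Wᵀ * S) R := by
    rw [inn_eq_trace, inn_eq_trace, Matrix.transpose_mul, Matrix.transpose_transpose,
      Matrix.mul_assoc]
  rw [frobSq_sub, frobSq_sub, h1, h2]
  ring

lemma sum_castLE {M : Type*} [AddCommMonoid M] {a b : ℕ} (h : a ≤ b) (f : Fin b → M)
    (hf : ∀ k : Fin b, a ≤ (k : ℕ) → f k = 0) :
    ∑ k : Fin b, f k = ∑ k : Fin a, f (Fin.castLE h k) := by
  classical
  let g : ℕ → M := fun i => if hi : i < b then f ⟨i, hi⟩ else 0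
  have hgb : ∀ k : Fin b, f k = g (k : ℕ) := by
    intro k; simp only [g, k.isLt, dif_pos, Fin.eta]
  have hga : ∀ k : Fin a, f (Fin.castLE h k) = g (k : ℕ) := by
    intro k
    have hk : (k : ℕ) < b := lt_of_lt_of_le k.isLt h
    simp only [g, hk, dif_pos]
    rfl
  rw [Finset.sum_congr rfl (fun k _ => hgb k), Finset.sum_congr rfl (fun k _ => hga k),
    Fin.sum_univ_eq_sum_range g b, Fin.sum_univ_eq_sum_range g a]
  refine (Finset.sum_subset (Finset.range_subset_range.mpr h) ?_).symm
  intro i hib hia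
  rw [Finset.mem_range] at hib
  rw [Finset.mem_range, not_lt] at hia
  simp only [g, hib, dif_pos]
  exact hf ⟨i, hib⟩ hia

lemma sum_diag (m N : ℕ) (F : Fin m → Fin N → ℝ) (hF : ∀ (i : Fin m) (j : Fin N), (i : ℕ) ≠ (j : ℕ) → F i j = 0) :
    ∑ i, ∑ j, F i j =
      ∑ k : Fin (min m N),
        F (Fin.castLE (min_le_left m N) k) (Fin.castLE (min_le_right m N) k) := by
  have inner : ∀ i : Fin m, (∑ j, F i j) = if hi : (i : ℕ) < N then F i ⟨i, hi⟩ else 0 := by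
    intro i
    by_cases hi : (i : ℕ) < N
    · rw [dif_pos hi]
      refine Finset.sum_eq_single_of_mem ((⟨(i : ℕ), hi⟩ : Fin N)) (Finset.mem_univ _) ?_
      intro j _ hj
      exact hF i j fun hc => hj (Fin.ext hc.symm)
    · rw [dif_neg hi]
      exact Finset.sum_eq_zero fun j _ => hF i j (by omega)
  rw [Finset.sum_congr rfl (fun i _ => inner i)]
  rw [sum_castLE (min_le_left m N)
    (f := fun i : Fin m => if hi : (i : ℕ) < N then F i ⟨(i : ℕ), hi⟩ else 0)
    (hf := ?_)]
  · refine Finset.sum_congr rfl fun k _ => ?_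
    have hk : ((Fin.castLE (min_le_left m N) k : Fin m) : ℕ) < N :=
      lt_of_lt_of_le k.isLt (min_le_right m N)
    rw [dif_pos hk]
    rfl
  · intro k hk
    have hkm := k.isLt
    simp only [dif_neg (show ¬ ((k : ℕ) < N) by omega)]

lemma card_lt_sum (n d : ℕ) (hd : d ≤ n) :
    ∑ j ∈ Finset.univ.filter (fun j : Fin n => (j : ℕ) < d), (1 : ℝ) = d := by
  rw [Finset.sum_filter]
  rw [sum_castLE hd (f := fun j : Fin n => if (j : ℕ) < d then (1 : ℝ) else 0)
    (hf := fun k hk => by simp only [if_neg (show ¬ ((k:ℕ) < d) by omega)])]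
  have : ∀ k : Fin d, ((Fin.castLE hd k : Fin n) : ℕ) < d := fun k => k.isLt
  simp [this]

lemma weight_bound (n d : ℕ) (hd : d ≤ n) (σ : Fin n → ℝ)
    (hnn : ∀ j, 0 ≤ σ j) (hdec : ∀ i j : Fin n, i ≤ j → σ j ≤ σ i)
    (w : Fin n → ℝ) (h0 : ∀ j, 0 ≤ w j) (h1 : ∀ j, w j ≤ 1) (hs : ∑ j, w j ≤ (d : ℝ)) :
    ∑ j, σ j ^ 2 * w j ≤ ∑ j ∈ Finset.univ.filter (fun j : Fin n => (j : ℕ) < d), σ j ^ 2 := by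
  have ht0 : 0 ≤ (if h : d < n then σ ⟨d, h⟩ ^ 2 else 0) := by
    split
    · exact sq_nonneg _
    · exact le_refl 0
  set t : ℝ := if h : d < n then σ ⟨d, h⟩ ^ 2 else 0 with ht
  have h_lo : ∀ j : Fin n, (j : ℕ) < d → t ≤ σ j ^ 2 := by
    intro j hj
    rw [ht]; split
    · rename_i h
      exact pow_le_pow_left₀ (hnn _) (hdec j ⟨d, h⟩ (Fin.le_def.mpr (le_of_lt hj))) 2
    · exact sq_nonneg _
  have h_hi : ∀ j : Fin n, d ≤ (j : ℕ) → σ j ^ 2 ≤ t := by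
    intro j hj
    have hdn : d < n := lt_of_le_of_lt hj j.isLt
    rw [ht, dif_pos hdn]
    exact pow_le_pow_left₀ (hnn _) (hdec ⟨d, hdn⟩ j (Fin.le_def.mpr hj)) 2
  have split1 := Finset.sum_filter_add_sum_filter_not Finset.univ
    (fun j : Fin n => (j : ℕ) < d) (fun j => σ j ^ 2 * w j)
  have split2 := Finset.sum_filter_add_sum_filter_not Finset.univ
    (fun j : Fin n => (j : ℕ) < d) w
  have A1 : ∑ j ∈ Finset.univ.filter (fun j : Fin n => ¬ (j : ℕ) < d), σ j ^ 2 * w j ≤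
      t * ∑ j ∈ Finset.univ.filter (fun j : Fin n => ¬ (j : ℕ) < d), w j := by
    rw [Finset.mul_sum]
    refine Finset.sum_le_sum fun j hj => ?_
    have hjd : d ≤ (j : ℕ) := not_lt.mp (Finset.mem_filter.mp hj).2
    exact mul_le_mul_of_nonneg_right (h_hi j hjd) (h0 j)
  have A2 : ∑ j ∈ Finset.univ.filter (fun j : Fin n => (j : ℕ) < d), t * (1 - w j) ≤
      ∑ j ∈ Finset.univ.filter (fun j : Fin n => (j : ℕ) < d), σ j ^ 2 * (1 - w j) := by
    refine Finset.sum_le_sum fun j hj => ?_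
    have hjd : (j : ℕ) < d := (Finset.mem_filter.mp hj).2
    exact mul_le_mul_of_nonneg_right (h_lo j hjd) (by linarith [h1 j])
  have A3 : ∑ j ∈ Finset.univ.filter (fun j : Fin n => (j : ℕ) < d), σ j ^ 2 * (1 - w j) =
      ∑ j ∈ Finset.univ.filter (fun j : Fin n => (j : ℕ) < d), σ j ^ 2 -
      ∑ j ∈ Finset.univ.filter (fun j : Fin n => (j : ℕ) < d), σ j ^ 2 * w j := by
    rw [← Finset.sum_sub_distrib]
    exact Finset.sum_congr rfl fun j _ => by ring
  have A4 : ∑ j ∈ Finset.univ.filter (fun j : Fin n => (j : ℕ) < d), t * (1 - w j) =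
      t * ((d : ℝ) - ∑ j ∈ Finset.univ.filter (fun j : Fin n => (j : ℕ) < d), w j) := by
    have hc := card_lt_sum n d hd
    rw [mul_sub, ← hc, Finset.mul_sum, Finset.mul_sum, ← Finset.sum_sub_distrib]
    exact Finset.sum_congr rfl fun j _ => by ring
  have A5 : t * ∑ j ∈ Finset.univ.filter (fun j : Fin n => ¬ (j : ℕ) < d), w j ≤
      t * ((d : ℝ) - ∑ j ∈ Finset.univ.filter (fun j : Fin n => (j : ℕ) < d), w j) := by
    refine mul_le_mul_of_nonneg_left ?_ ht0
    linarith [split2]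
  linarith [A1, A2, A3, A4, A5, split1]


lemma exists_W (m d : ℕ) (hdm : d ≤ m) (U : Matrix (Fin m) (Fin d) ℝ) :
    ∃ W : Matrix (Fin m) (Fin d) ℝ, Wᵀ * W = 1 ∧ W * (Wᵀ * U) = U := by
  classical
  set cols : Fin d → EuclideanSpace ℝ (Fin m) := fun j => WithLp.toLp 2 (fun i => U i j) with hcols
  set K : Submodule ℝ (EuclideanSpace ℝ (Fin m)) := Submodule.span ℝ (Set.range cols) with hK
  have hrle : finrank ℝ K ≤ d := by
    refine (finrank_span_le_card _).trans ?_
    have := Fintype.card_range_le cols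
    rw [Set.toFinset_card]
    simpa using this
  set r := finrank ℝ K with hr
  let b0 : OrthonormalBasis (Fin r) ℝ K := stdOrthonormalBasis ℝ K
  set v' : Fin m → EuclideanSpace ℝ (Fin m) :=
    fun i => if h : (i : ℕ) < r then (b0 ⟨(i : ℕ), h⟩ : EuclideanSpace ℝ (Fin m)) else 0 with hv'
  set s : Set (Fin m) := {i : Fin m | (i : ℕ) < r} with hs
  have hv : Orthonormal ℝ (s.restrict v') := by
    rw [orthonormal_iff_ite]
    rintro ⟨i, hi⟩ ⟨j, hj⟩
    have hi' : (i : ℕ) < r := hi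
    have hj' : (j : ℕ) < r := hj
    change inner ℝ (v' i) (v' j) = _
    simp only [hv', dif_pos hi', dif_pos hj']
    rw [← Submodule.coe_inner, orthonormal_iff_ite.mp b0.orthonormal]
    congr 1
    simp only [eq_iff_iff]
    constructor
    · intro h
      simp only [Fin.mk.injEq] at h
      exact Subtype.ext (Fin.ext h)
    · intro h
      have h2 : i = j := Subtype.ext_iff.mp h
      simp [h2]
  have hcard : finrank ℝ (EuclideanSpace ℝ (Fin m)) = Fintype.card (Fin m) := by
    simp [finrank_euclideanSpace_fin]
  obtain ⟨b, hb⟩ := hv.exists_orthonormalBasis_extension_of_card_eq hcard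
  -- each basis vector with index < r, coerced, is a `b` value
  have hbv : ∀ (j : ℕ) (hj : j < r),
      (b0 ⟨j, hj⟩ : EuclideanSpace ℝ (Fin m)) = b ⟨j, lt_of_lt_of_le hj (hrle.trans hdm)⟩ := by
    intro j hj
    have hmem : (⟨j, lt_of_lt_of_le hj (hrle.trans hdm)⟩ : Fin m) ∈ s := hj
    rw [hb _ hmem, hv']
    simp [hj]
  -- inner products with `b k`, `k ≥ r`, of elements of K vanish
  have hperp : ∀ (u : EuclideanSpace ℝ (Fin m)), u ∈ K → ∀ k : Fin m, r ≤ (k : ℕ) →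
      (inner ℝ (b k) u : ℝ) = 0 := by
    intro u hu k hk
    obtain ⟨x, rfl⟩ : ∃ x : K, (x : EuclideanSpace ℝ (Fin m)) = u := ⟨⟨u, hu⟩, rfl⟩
    rw [← b0.sum_repr x]
    push_cast [Submodule.coe_sum]
    rw [inner_sum]
    refine Finset.sum_eq_zero fun j _ => ?_
    rw [real_inner_smul_right, hbv j j.isLt,
      orthonormal_iff_ite.mp b.orthonormal,
      if_neg (by intro h; have := congrArg Fin.val h; simp at this; omega)]
    ring
  -- the key reconstruction property
  have hrec : ∀ (u : EuclideanSpace ℝ (Fin m)), u ∈ K →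
      ∑ k : Fin d, (inner ℝ (b (Fin.castLE hdm k)) u : ℝ) • b (Fin.castLE hdm k) = u := by
    intro u hu
    have := b.sum_repr' u
    rw [sum_castLE hdm (f := fun k : Fin m => (inner ℝ (b k) u : ℝ) • b k)
      (hf := fun k hk => by show (inner ℝ (b k) u : ℝ) • b k = 0
                            rw [hperp u hu k (hrle.trans hk), zero_smul])] at this
    exact this
  refine ⟨Matrix.of fun i k => b (Fin.castLE hdm k) i, ?_, ?_⟩
  · ext k l
    have horth := orthonormal_iff_ite.mp b.orthonormal (Fin.castLE hdm k) (Fin.castLE hdm l)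
    rw [PiLp.inner_apply] at horth
    simp only [RCLike.inner_apply, starRingEnd_apply, star_trivial, mul_comm] at horth
    simp only [Matrix.mul_apply, Matrix.transpose_apply, Matrix.one_apply, Matrix.of_apply, mul_comm]
    rw [horth]
    by_cases h : k = l
    · simp [h]
    · rw [if_neg (fun hc => h (Fin.castLE_injective hdm hc)), if_neg h]
  · ext i j
    have hu : cols j ∈ K := Submodule.subset_span (Set.mem_range_self j)
    have key := hrec (cols j) hu
    have key2 := congrArg
      (fun x : EuclideanSpace ℝ (Fin m) => (inner ℝ (EuclideanSpace.single i (1:ℝ)) x : ℝ)) key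
    simp only [inner_sum, real_inner_smul_right, PiLp.inner_apply, RCLike.inner_apply,
      starRingEnd_apply, star_trivial, EuclideanSpace.single_apply, PiLp.smul_apply,
      smul_eq_mul, ite_mul, one_mul, zero_mul, Finset.sum_ite_eq'] at key2
    simp only [mul_ite, mul_one, mul_zero, Finset.sum_ite_eq, Finset.sum_ite_eq', Finset.mem_univ, if_true] at key2
    simp only [hcols] at key2
    simp only [Matrix.mul_apply, Matrix.transpose_apply, Matrix.of_apply]
    show _ = U i j
    rw [← key2]
    exact Finset.sum_congr rfl fun k _ => by rw [Finset.sum_congr rfl fun x _ => mul_comm (U x j) _]; ring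


lemma frobSq_S (m N : ℕ) (σ : Fin (min m N) → ℝ) (S : Matrix (Fin m) (Fin N) ℝ)
    (hSdiag : ∀ (i : Fin m) (j : Fin N) (h : (i : ℕ) = (j : ℕ)),
        S i j = σ ⟨(i : ℕ), lt_min i.isLt (lt_of_eq_of_lt h j.isLt)⟩)
    (hSoff : ∀ (i : Fin m) (j : Fin N), (i : ℕ) ≠ (j : ℕ) → S i j = 0) :
    frobSq S = ∑ k : Fin (min m N), σ k ^ 2 := by
  rw [frobSq, sum_diag m N _ (fun i j h => by rw [hSoff i j h]; ring)]
  refine Finset.sum_congr rfl fun k _ => ?_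
  rw [hSdiag _ _ rfl]
  congr 1

lemma core (m N d : ℕ) (hd : d ≤ min m N) (σ : Fin (min m N) → ℝ)
    (hσnonneg : ∀ j, 0 ≤ σ j)
    (hσdec : ∀ i j : Fin (min m N), i ≤ j → σ j ≤ σ i)
    (S : Matrix (Fin m) (Fin N) ℝ)
    (hSdiag : ∀ (i : Fin m) (j : Fin N) (h : (i : ℕ) = (j : ℕ)),
        S i j = σ ⟨(i : ℕ), lt_min i.isLt (lt_of_eq_of_lt h j.isLt)⟩)
    (hSoff : ∀ (i : Fin m) (j : Fin N), (i : ℕ) ≠ (j : ℕ) → S i j = 0)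
    (U : Matrix (Fin m) (Fin d) ℝ) (T : Matrix (Fin d) (Fin N) ℝ) :
    (∑ j ∈ Finset.univ.filter (fun j : Fin (min m N) => d ≤ (j : ℕ)), σ j ^ 2) ≤
      frobSq (S - U * T) := by
  obtain ⟨W, hW1, hW2⟩ := exists_W m d (hd.trans (min_le_left m N)) U
  have hUT : U * T = W * ((Wᵀ * U) * T) := by
    rw [← Matrix.mul_assoc, hW2]
  rw [hUT, orth_expand W hW1 S ((Wᵀ * U) * T)]
  -- weights
  set w : Fin (min m N) → ℝ :=
    fun k => ∑ l : Fin d, W (Fin.castLE (min_le_left m N) k) l ^ 2 with hw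
  have hWS : frobSq (Wᵀ * S) = ∑ k : Fin (min m N), σ k ^ 2 * w k := by
    rw [frobSq, Finset.sum_comm]
    rw [sum_castLE (min_le_right m N)
      (f := fun j : Fin N => ∑ k : Fin d, (Wᵀ * S) k j ^ 2) (hf := ?_)]
    · refine Finset.sum_congr rfl fun q _ => ?_
      have hin : ∀ k : Fin d, (Wᵀ * S) k (Fin.castLE (min_le_right m N) q) =
          W (Fin.castLE (min_le_left m N) q) k * σ q := by
        intro k
        rw [Matrix.mul_apply]
        rw [Finset.sum_eq_single_of_mem
          ((Fin.castLE (min_le_left m N) q : Fin m)) (Finset.mem_univ _) ?_]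
        · rw [Matrix.transpose_apply, hSdiag _ _ rfl]
          congr 1
        · intro i _ hi
          rw [hSoff i _ (fun hc => hi (Fin.ext hc)), mul_zero]
      rw [Finset.sum_congr rfl fun k _ => by rw [hin k]]
      rw [hw]
      simp only [mul_pow, Finset.sum_mul]
      rw [Finset.mul_sum]
      exact Finset.sum_congr rfl fun k _ => by ring
    · intro j hj
      refine Finset.sum_eq_zero fun k _ => ?_
      rw [Matrix.mul_apply]
      rw [Finset.sum_eq_zero fun i _ => by
        rw [Matrix.transpose_apply, hSoff i j (by have := i.isLt; omega), mul_zero]]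
      ring
  have h0 : ∀ k, 0 ≤ w k := fun k => Finset.sum_nonneg fun l _ => sq_nonneg _
  have h1 : ∀ k, w k ≤ 1 := by
    intro k
    set i : Fin m := Fin.castLE (min_le_left m N) k with hi
    have hww : w k = (W * Wᵀ) i i := by
      rw [hw, Matrix.mul_apply]
      exact Finset.sum_congr rfl fun l _ => by rw [Matrix.transpose_apply]; ring
    have hidem : (W * Wᵀ) * (W * Wᵀ) = W * Wᵀ := by
      rw [Matrix.mul_assoc, ← Matrix.mul_assoc Wᵀ W Wᵀ, hW1, Matrix.one_mul]
    have hsymm : ∀ a b, (W * Wᵀ) a b = (W * Wᵀ) b a := by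
      intro a b
      rw [Matrix.mul_apply, Matrix.mul_apply]
      exact Finset.sum_congr rfl fun l _ => by rw [Matrix.transpose_apply, Matrix.transpose_apply]; ring
    have hexp : (W * Wᵀ) i i = ∑ t, ((W * Wᵀ) i t) ^ 2 := by
      conv_lhs => rw [← hidem]
      rw [Matrix.mul_apply]
      exact Finset.sum_congr rfl fun t _ => by rw [hsymm t i]; ring
    have hle : ((W * Wᵀ) i i) ^ 2 ≤ (W * Wᵀ) i i :=
      calc ((W * Wᵀ) i i) ^ 2 ≤ ∑ t, ((W * Wᵀ) i t) ^ 2 :=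
            Finset.single_le_sum (f := fun t => ((W * Wᵀ) i t) ^ 2)
              (fun t _ => sq_nonneg _) (Finset.mem_univ i)
        _ = (W * Wᵀ) i i := hexp.symm
    have hpos : 0 ≤ (W * Wᵀ) i i :=
      calc (0:ℝ) ≤ ∑ t, ((W * Wᵀ) i t) ^ 2 := Finset.sum_nonneg fun t _ => sq_nonneg _
        _ = (W * Wᵀ) i i := hexp.symm
    rw [hww]
    nlinarith [hle, hpos]
  have hsum : ∑ k, w k ≤ (d : ℝ) := by
    have htr : ∑ i : Fin m, ∑ l : Fin d, W i l ^ 2 = (d : ℝ) := by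
      rw [Finset.sum_comm]
      have : ∀ l : Fin d, ∑ i : Fin m, W i l ^ 2 = 1 := by
        intro l
        have := congrFun (congrFun hW1 l) l
        rw [Matrix.mul_apply, Matrix.one_apply_eq] at this
        rw [← this]
        exact Finset.sum_congr rfl fun i _ => by rw [Matrix.transpose_apply]; ring
      rw [Finset.sum_congr rfl fun l _ => this l]
      simp
    rw [← htr]
    have := Finset.sum_le_sum_of_subset_of_nonneg
      (s := Finset.univ.image (Fin.castLE (min_le_left m N)))
      (t := Finset.univ) (f := fun i : Fin m => ∑ l : Fin d, W i l ^ 2)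
      (Finset.subset_univ _)
      (fun i _ _ => Finset.sum_nonneg fun l _ => sq_nonneg _)
    rw [Finset.sum_image (fun a _ b _ hab => Fin.castLE_injective _ hab)] at this
    simpa [hw] using this
  have hwb := weight_bound (min m N) d hd σ hσnonneg hσdec w h0 h1 hsum
  have hFS := frobSq_S m N σ S hSdiag hSoff
  have hsplit := Finset.sum_filter_add_sum_filter_not Finset.univ
    (fun j : Fin (min m N) => (j : ℕ) < d) (fun j => σ j ^ 2)
  have hfilter : Finset.univ.filter (fun j : Fin (min m N) => d ≤ (j : ℕ)) =
      Finset.univ.filter (fun j : Fin (min m N) => ¬ (j : ℕ) < d) := by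
    refine Finset.filter_congr fun x _ => ?_
    simp [not_lt]
  rw [hfilter]
  have hnn := frobSq_nonneg (Wᵀ * S - (Wᵀ * U) * T)
  rw [hFS, hWS] at *
  linarith [hwb, hsplit, hnn]


end EY
end Aux

open EY

/-- Let `x̄ = (1/N) X e` and let `X − x̄ eᵀ = Q S Vᵀ` be an SVD with singular values
`σ_1 ≥ σ_2 ≥ …` on the (rectangular) diagonal of `S`.  Then for every `c`, `U` (m×d) and
`T` (d×N) one has `‖X − (c eᵀ + U T)‖_F² ≥ Σ_{j>d} σ_j²`, with equality attained at
`c = x̄`, `U = Q_d`, `T = diag(σ_1,…,σ_d) V_dᵀ`. -/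

theorem stmt_1 (m N d : ℕ) (hN : 0 < N) (hd : d ≤ min m N)
    (X : Matrix (Fin m) (Fin N) ℝ)
    (Q : Matrix (Fin m) (Fin m) ℝ) (V : Matrix (Fin N) (Fin N) ℝ)
    (σ : Fin (min m N) → ℝ)
    (S : Matrix (Fin m) (Fin N) ℝ)
    (hQ : Qᵀ * Q = 1) (hV : Vᵀ * V = 1)
    (hσnonneg : ∀ j, 0 ≤ σ j)
    (hσdec : ∀ i j : Fin (min m N), i ≤ j → σ j ≤ σ i)
    (hSdiag : ∀ (i : Fin m) (j : Fin N) (h : (i : ℕ) = (j : ℕ)),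
        S i j = σ ⟨(i : ℕ), lt_min i.isLt (lt_of_eq_of_lt h j.isLt)⟩)
    (hSoff : ∀ (i : Fin m) (j : Fin N), (i : ℕ) ≠ (j : ℕ) → S i j = 0)
    (xbar : Fin m → ℝ) (hxbar : xbar = fun i => (N : ℝ)⁻¹ * ∑ j, X i j)
    (hSVD : X - vecMulVec xbar (fun _ => (1 : ℝ)) = Q * S * Vᵀ) :
    (∀ (c : Fin m → ℝ) (U : Matrix (Fin m) (Fin d) ℝ) (T : Matrix (Fin d) (Fin N) ℝ),
        (∑ j ∈ Finset.univ.filter (fun j : Fin (min m N) => d ≤ (j : ℕ)), σ j ^ 2) ≤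
          frob (X - (vecMulVec c (fun _ => (1 : ℝ)) + U * T)) ^ 2) ∧
    frob (X - (vecMulVec xbar (fun _ => (1 : ℝ)) +
        (Q.submatrix id (Fin.castLE (hd.trans (min_le_left m N)))) *
          (Matrix.diagonal (fun j : Fin d => σ (Fin.castLE hd j)) *
            (V.submatrix id (Fin.castLE (hd.trans (min_le_right m N))))ᵀ))) ^ 2 =
      ∑ j ∈ Finset.univ.filter (fun j : Fin (min m N) => d ≤ (j : ℕ)), σ j ^ 2 := by
  have hNz : (N : ℝ) ≠ 0 := Nat.cast_ne_zero.mpr hN.ne'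
  set ones : Fin N → ℝ := fun _ => (1 : ℝ) with hones
  have hQQ : Q * Qᵀ = 1 := mul_eq_one_comm.mp hQ
  have hVV : V * Vᵀ = 1 := mul_eq_one_comm.mp hV
  -- the centered matrix kills the all-ones rank-one matrix
  have hrow : ∀ i : Fin m, ∑ k, (Q * S * Vᵀ) i k = 0 := by
    intro i
    have : ∀ k : Fin N, (Q * S * Vᵀ) i k = X i k - xbar i := by
      intro k
      have h := congrFun (congrFun hSVD i) k
      simp only [Matrix.sub_apply, Matrix.vecMulVec_apply, hones, mul_one] at h
      rw [← h]
    rw [Finset.sum_congr rfl fun k _ => this k]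
    rw [Finset.sum_sub_distrib, Finset.sum_const, Finset.card_univ, Fintype.card_fin, nsmul_eq_mul]
    rw [hxbar]
    field_simp
    ring
  have hAee : (Q * S * Vᵀ) * vecMulVec ones ones = 0 := by
    ext i j
    simp only [Matrix.mul_apply, Matrix.vecMulVec_apply, hones, mul_one, Matrix.zero_apply]
    exact hrow i
  have heeee : vecMulVec ones ones * vecMulVec ones ones = (N : ℝ) • vecMulVec ones ones := by
    ext i j
    simp [Matrix.mul_apply, Matrix.vecMulVec_apply, hones]
  set P : Matrix (Fin N) (Fin N) ℝ := 1 - (N : ℝ)⁻¹ • vecMulVec ones ones with hP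
  have hPt : Pᵀ = P := by
    rw [hP]
    ext i j
    simp only [Matrix.transpose_apply, Matrix.sub_apply, Matrix.smul_apply, Matrix.one_apply,
      Matrix.vecMulVec_apply, hones, smul_eq_mul]
    rw [show ((if j = i then (1:ℝ) else 0) = if i = j then (1:ℝ) else 0) from by
      by_cases h : i = j
      · simp [h]
      · rw [if_neg h, if_neg (fun hc => h hc.symm)]]
  have hEP : vecMulVec ones ones * P = 0 := by
    rw [hP, Matrix.mul_sub, Matrix.mul_one, Matrix.mul_smul, heeee, smul_smul,
      inv_mul_cancel₀ hNz, one_smul, sub_self]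
  have hPP : P * P = P := by
    nth_rewrite 1 [hP]
    rw [Matrix.sub_mul, Matrix.one_mul, Matrix.smul_mul, hEP, smul_zero, sub_zero]
  have hAP : (Q * S * Vᵀ) * P = Q * S * Vᵀ := by
    rw [hP, Matrix.mul_sub, Matrix.mul_one, Matrix.mul_smul, hAee, smul_zero, sub_zero]
  have hvP : ∀ v : Fin m → ℝ, vecMulVec v ones * P = 0 := by
    intro v
    have h1 : vecMulVec v ones * vecMulVec ones ones = (N : ℝ) • vecMulVec v ones := by
      ext i j
      simp [Matrix.mul_apply, Matrix.vecMulVec_apply, hones]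
    rw [hP, Matrix.mul_sub, Matrix.mul_one, Matrix.mul_smul, h1, smul_smul,
      inv_mul_cancel₀ hNz, one_smul, sub_self]
  clear_value P
  clear hEP heeee hAee
  constructor
  · intro c U T
    rw [frob_sq]
    have hM : X - (vecMulVec c ones + U * T) =
        (Q * S * Vᵀ + vecMulVec (fun i => xbar i - c i) ones) - U * T := by
      ext i j
      have h := congrFun (congrFun hSVD i) j
      simp only [Matrix.sub_apply, Matrix.vecMulVec_apply, hones, mul_one] at h
      simp only [Matrix.sub_apply, Matrix.add_apply, Matrix.vecMulVec_apply, hones, mul_one]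
      linarith [h]
    have hMP : ((Q * S * Vᵀ + vecMulVec (fun i => xbar i - c i) ones) - U * T) * P =
        Q * S * Vᵀ - U * (T * P) := by
      rw [Matrix.sub_mul, Matrix.add_mul, hAP, hvP, add_zero, Matrix.mul_assoc U T P]
    have hstep1 := proj_le ((Q * S * Vᵀ + vecMulVec (fun i => xbar i - c i) ones) - U * T) P hPt hPP
    rw [hMP] at hstep1
    have hfact : Q * S * Vᵀ - U * (T * P) =
        Q * (S - (Qᵀ * U) * ((T * P) * V)) * Vᵀ := by
      have h2 : Q * ((Qᵀ * U) * ((T * P) * V)) * Vᵀ = U * (T * P) := by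
        calc Q * ((Qᵀ * U) * ((T * P) * V)) * Vᵀ
            = ((Q * Qᵀ) * U) * ((T * P) * (V * Vᵀ)) := by simp only [Matrix.mul_assoc]
          _ = U * (T * P) := by rw [hQQ, hVV, Matrix.one_mul, Matrix.mul_one]
      rw [Matrix.mul_sub, Matrix.sub_mul, h2]
    have hinv : frobSq (Q * (S - (Qᵀ * U) * ((T * P) * V)) * Vᵀ) =
        frobSq (S - (Qᵀ * U) * ((T * P) * V)) := by
      rw [frobSq_mul_orth_right V hV, frobSq_mul_orth_left Q hQ]
    have hcore := core m N d hd σ hσnonneg hσdec S hSdiag hSoff (Qᵀ * U) ((T * P) * V)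
    rw [hM]
    calc (∑ j ∈ Finset.univ.filter (fun j : Fin (min m N) => d ≤ (j : ℕ)), σ j ^ 2)
        ≤ frobSq (S - (Qᵀ * U) * ((T * P) * V)) := hcore
      _ = frobSq (Q * S * Vᵀ - U * (T * P)) := by rw [hfact, hinv]
      _ ≤ frobSq ((Q * S * Vᵀ + vecMulVec (fun i => xbar i - c i) ones) - U * T) := hstep1
  · rw [frob_sq]
    set S' : Matrix (Fin m) (Fin N) ℝ :=
      Matrix.of (fun i j => if (i : ℕ) = (j : ℕ) ∧ (i : ℕ) < d then S i j else 0) with hS'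
    have hQd : (Q.submatrix id (Fin.castLE (hd.trans (min_le_left m N)))) *
          (Matrix.diagonal (fun j : Fin d => σ (Fin.castLE hd j)) *
            (V.submatrix id (Fin.castLE (hd.trans (min_le_right m N))))ᵀ) = Q * S' * Vᵀ := by
      ext i j
      rw [Matrix.mul_apply]
      have hL : ∀ k : Fin d,
          Q.submatrix id (Fin.castLE (hd.trans (min_le_left m N))) i k *
            (Matrix.diagonal (fun j : Fin d => σ (Fin.castLE hd j)) *
              (V.submatrix id (Fin.castLE (hd.trans (min_le_right m N))))ᵀ) k j =
          Q i (Fin.castLE (hd.trans (min_le_left m N)) k) *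
            (σ (Fin.castLE hd k) * V j (Fin.castLE (hd.trans (min_le_right m N)) k)) := by
        intro k
        rw [Matrix.diagonal_mul, Matrix.submatrix_apply, Matrix.transpose_apply,
          Matrix.submatrix_apply]
        rfl
      rw [Finset.sum_congr rfl fun k _ => hL k]
      -- now compute the RHS
      rw [Matrix.mul_apply]
      have hR : ∀ b : Fin N, (Q * S') i b * Vᵀ b j =
          (if hb : (b : ℕ) < d then
            Q i (Fin.castLE (hd.trans (min_le_left m N)) ⟨(b : ℕ), hb⟩) *
              (σ (Fin.castLE hd ⟨(b : ℕ), hb⟩) * V j b) else 0) := by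
        intro b
        rw [Matrix.mul_apply, Matrix.transpose_apply]
        by_cases hb : (b : ℕ) < d
        · rw [dif_pos hb]
          rw [Finset.sum_eq_single_of_mem
            (Fin.castLE (hd.trans (min_le_left m N)) ⟨(b : ℕ), hb⟩) (Finset.mem_univ _) ?_]
          · rw [hS']
            simp only [Matrix.of_apply]
            rw [if_pos ⟨rfl, hb⟩]
            rw [hSdiag _ _ rfl]
            rw [show σ ⟨((Fin.castLE (hd.trans (min_le_left m N)) ⟨(b : ℕ), hb⟩ : Fin m) : ℕ),
                lt_min (Fin.isLt _) (lt_of_eq_of_lt rfl b.isLt)⟩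
                = σ (Fin.castLE hd ⟨(b : ℕ), hb⟩) from congrArg σ (Fin.ext rfl)]
            ring
          · intro a _ ha
            rw [hS']
            simp only [Matrix.of_apply]
            rw [if_neg, mul_zero]
            rintro ⟨h1, h2⟩
            exact ha (Fin.ext h1)
        · rw [dif_neg hb]
          rw [Finset.sum_eq_zero, zero_mul]
          intro a _
          rw [hS']
          simp only [Matrix.of_apply]
          rw [if_neg, mul_zero]
          rintro ⟨h1, h2⟩
          omega
      rw [Finset.sum_congr rfl fun b _ => hR b]
      rw [sum_castLE (hd.trans (min_le_right m N))
        (f := fun b : Fin N => if hb : (b : ℕ) < d then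
            Q i (Fin.castLE (hd.trans (min_le_left m N)) ⟨(b : ℕ), hb⟩) *
              (σ (Fin.castLE hd ⟨(b : ℕ), hb⟩) * V j b) else 0)
        (hf := fun k hk => by simp only [dif_neg (show ¬ ((k : ℕ) < d) by omega)])]
      refine Finset.sum_congr rfl fun k _ => ?_
      have hkd : ((Fin.castLE (hd.trans (min_le_right m N)) k : Fin N) : ℕ) < d := k.isLt
      rw [dif_pos hkd]
      rw [show (⟨((Fin.castLE (hd.trans (min_le_right m N)) k : Fin N) : ℕ), hkd⟩ : Fin d) = k
        from Fin.ext rfl]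
    have hdiff : X - (vecMulVec xbar ones + Q * S' * Vᵀ) = Q * (S - S') * Vᵀ := by
      rw [Matrix.mul_sub, Matrix.sub_mul]
      have hX : X - vecMulVec xbar ones = Q * S * Vᵀ := hSVD
      ext i j
      simp only [Matrix.sub_apply, Matrix.add_apply]
      have h := congrFun (congrFun hX i) j
      simp only [Matrix.sub_apply] at h
      linarith [h]
    rw [hQd, hdiff, frobSq_mul_orth_right V hV, frobSq_mul_orth_left Q hQ]
    rw [show frobSq (S - S') = ∑ i, ∑ j, ((S - S') i j) ^ 2 from rfl]
    rw [sum_diag m N _ (fun i j hij => by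
      rw [Matrix.sub_apply, hS']
      simp only [Matrix.of_apply]
      rw [if_neg (fun hc => hij hc.1), hSoff i j hij]
      ring)]
    rw [Finset.sum_filter]
    refine Finset.sum_congr rfl fun k _ => ?_
    rw [Matrix.sub_apply, hS']
    simp only [Matrix.of_apply]
    by_cases hk : (k : ℕ) < d
    · rw [if_pos ⟨rfl, hk⟩, if_neg (by omega), sub_self]
      ring
    · rw [if_neg (fun hc => hk hc.2), if_pos (by omega), sub_zero]
      rw [hSdiag _ _ rfl]
      exact congrArg (fun x => x ^ 2) (congrArg σ (Fin.ext rfl))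
end

section
/- Let B be an N-by-N real symmetric positive semidefinite matrix with B e = 0, where e is the all-ones vector in R^N, and let 0 = λ_1 ≤ λ_2 ≤ … ≤ λ_N be its eigenvalues (counted with multiplicity, with e/√N assigned to λ_1 = 0). Let 1 ≤ d with d + 1 ≤ N. Then the minimum of trace(T B T^T) over all d-by-N real matrices T satisfying T T^T = I_d and T e = 0 equals λ_2 + λ_3 + … + λ_{d+1}, and it is attained when the rows of T are orthonormal eigenvectors of B corresponding to the eigenvalues λ_2, …, λ_{d+1}. -/
open Matrix

lemma aux_trace {d N : ℕ} (S : Matrix (Fin d) (Fin N) ℝ) (lam : Fin N → ℝ) :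
    (S * Matrix.diagonal lam * Sᵀ).trace = ∑ k : Fin N, lam k * ∑ j : Fin d, (S j k)^2 := by
  have h : ∀ j k, (S * Matrix.diagonal lam) j k = S j k * lam k :=
    fun j k => Matrix.mul_diagonal ..
  simp only [Matrix.trace, Matrix.diag_apply, Matrix.mul_apply, h, Matrix.transpose_apply]
  rw [Finset.sum_comm]
  refine Finset.sum_congr rfl fun k _ => ?_
  rw [Finset.mul_sum]
  exact Finset.sum_congr rfl fun j _ => by ring

lemma aux_shift {N d : ℕ} (hd : 1 ≤ d) (hdN : d + 1 ≤ N) (f : Fin N → ℝ) :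
    ∑ k : Fin N, f k * (if 1 ≤ (k:ℕ) ∧ (k:ℕ) ≤ d then (1:ℝ) else 0) =
      ∑ j : Fin d, f ⟨(j:ℕ)+1, by omega⟩ := by
  simp only [mul_ite, mul_one, mul_zero, ← Finset.sum_filter]
  refine Finset.sum_nbij' (fun k => ⟨min ((k:ℕ)-1) (d-1), by omega⟩)
    (fun j => ⟨(j:ℕ)+1, by omega⟩) ?_ ?_ ?_ ?_ ?_
  · intro k hk; simp at hk ⊢
  · intro j hj; simp
  · intro k hk; simp at hk; ext; simp; omega
  · intro j hj; ext; simp; omega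
  · intro k hk; simp at hk; congr 1; ext; simp; omega

/-- Let `B` be symmetric positive semidefinite with `B e = 0`, with orthonormal
eigenvector matrix `U` (whose first column is `e/√N`) and nondecreasing eigenvalues
`λ_1 = 0 ≤ λ_2 ≤ …`, i.e. `B = U diag(λ) Uᵀ`.  Then the minimum of `trace(T B Tᵀ)` over
all `d×N` matrices `T` with `T Tᵀ = I_d` and `T e = 0` equals `λ_2 + … + λ_{d+1}`, and
it is attained when the rows of `T` are the orthonormal eigenvectors of `B` for
`λ_2, …, λ_{d+1}` (columns `2,…,d+1` of `U`). -/
theorem stmt_5 (N d : ℕ) (hd : 1 ≤ d) (hdN : d + 1 ≤ N)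
    (B : Matrix (Fin N) (Fin N) ℝ) (hB : B.PosSemidef)
    (hBe : B *ᵥ (fun _ => (1 : ℝ)) = 0)
    (U : Matrix (Fin N) (Fin N) ℝ) (hU : Uᵀ * U = 1)
    (lam : Fin N → ℝ) (hmono : Monotone lam)
    (hBU : B = U * Matrix.diagonal lam * Uᵀ)
    (hU0 : ∀ i, U i ⟨0, by omega⟩ = (Real.sqrt N)⁻¹)
    (hlam0 : lam ⟨0, by omega⟩ = 0) :
    (∀ T : Matrix (Fin d) (Fin N) ℝ, T * Tᵀ = 1 → T *ᵥ (fun _ => (1 : ℝ)) = 0 →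
        (∑ j : Fin d, lam ⟨(j : ℕ) + 1, (Nat.succ_lt_succ j.isLt).trans_le hdN⟩) ≤
          (T * B * Tᵀ).trace) ∧
    (∀ T : Matrix (Fin d) (Fin N) ℝ,
        T = Matrix.of (fun (j : Fin d) (i : Fin N) =>
            U i ⟨(j : ℕ) + 1, (Nat.succ_lt_succ j.isLt).trans_le hdN⟩) →
        T * Tᵀ = 1 ∧ T *ᵥ (fun _ => (1 : ℝ)) = 0 ∧
          (T * B * Tᵀ).trace =
            ∑ j : Fin d, lam ⟨(j : ℕ) + 1, (Nat.succ_lt_succ j.isLt).trans_le hdN⟩) := by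
  have hNpos : 0 < N := by omega
  have hUUt : U * Uᵀ = 1 := mul_eq_one_comm.mp hU
  set chi : Fin N → ℝ := fun k => if 1 ≤ (k:ℕ) ∧ (k:ℕ) ≤ d then (1:ℝ) else 0 with hchi
  -- column sums of U vanish for k ≠ 0
  have hsqrt : (Real.sqrt N) ≠ 0 := by
    positivity
  have hcolsum : ∀ k : Fin N, (k:ℕ) ≠ 0 → ∑ i, U i k = 0 := by
    intro k hk
    have h1 := congrFun (congrFun hU k) ⟨0, hNpos⟩
    simp only [Matrix.mul_apply, Matrix.transpose_apply, Matrix.one_apply] at h1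
    rw [if_neg (by simp [Fin.ext_iff]; omega)] at h1
    have h2 : ∑ i, U i k * U i ⟨0, hNpos⟩ = (∑ i, U i k) * (Real.sqrt N)⁻¹ := by
      rw [Finset.sum_mul]
      exact Finset.sum_congr rfl fun i _ => by rw [hU0 i]
    rw [h2] at h1
    have := inv_ne_zero hsqrt
    field_simp at h1
    simpa using h1
  constructor
  · -- lower bound
    intro T hT hTe
    set S : Matrix (Fin d) (Fin N) ℝ := T * U with hS
    have hSSt : S * Sᵀ = 1 := by
      rw [hS, Matrix.transpose_mul]
      calc T * U * (Uᵀ * Tᵀ) = T * (U * Uᵀ) * Tᵀ := by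
            simp only [Matrix.mul_assoc]
        _ = 1 := by rw [hUUt, Matrix.mul_one, hT]
    set c : Fin N → ℝ := fun k => ∑ j : Fin d, (S j k)^2 with hc
    have hc0 : ∀ k, 0 ≤ c k := fun k => Finset.sum_nonneg fun j _ => sq_nonneg _
    -- P = Sᵀ S is a projection
    set P : Matrix (Fin N) (Fin N) ℝ := Sᵀ * S with hP
    have hPP : P * P = P := by
      rw [hP]
      calc Sᵀ * S * (Sᵀ * S) = Sᵀ * (S * Sᵀ) * S := by simp only [Matrix.mul_assoc]
        _ = Sᵀ * S := by rw [hSSt, Matrix.mul_one]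
    have hPsym : ∀ m k, P m k = P k m := by
      intro m k
      simp only [hP, Matrix.mul_apply, Matrix.transpose_apply]
      exact Finset.sum_congr rfl fun j _ => by ring
    have hcP : ∀ k, c k = P k k := by
      intro k
      simp only [hc, hP, Matrix.mul_apply, Matrix.transpose_apply]
      exact Finset.sum_congr rfl fun j _ => by ring
    have hc1 : ∀ k, c k ≤ 1 := by
      intro k
      have h1 : P k k = ∑ m, (P m k)^2 := by
        conv_lhs => rw [← hPP]
        simp only [Matrix.mul_apply]
        exact Finset.sum_congr rfl fun m _ => by rw [hPsym k m]; ring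
      have h2 : (P k k)^2 ≤ ∑ m, (P m k)^2 :=
        Finset.single_le_sum (f := fun m => (P m k)^2) (fun m _ => sq_nonneg _)
          (Finset.mem_univ k)
      have h3 : c k ^ 2 ≤ c k := by rw [hcP k]; nlinarith [h1, h2]
      nlinarith [h3]
    have hcsum : ∑ k, c k = d := by
      rw [hc, Finset.sum_comm]
      have : ∀ j : Fin d, ∑ k, (S j k)^2 = 1 := by
        intro j
        have := congrFun (congrFun hSSt j) j
        simp only [Matrix.mul_apply, Matrix.transpose_apply, Matrix.one_apply_eq] at this
        rw [← this]
        exact Finset.sum_congr rfl fun k _ => by ring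
      simp [this]
    have hczero : c ⟨0, hNpos⟩ = 0 := by
      rw [hc]
      refine Finset.sum_eq_zero fun j _ => ?_
      have hSj0 : S j ⟨0, hNpos⟩ = 0 := by
        have hTej := congrFun hTe j
        simp only [Matrix.mulVec, dotProduct, mul_one, Pi.zero_apply] at hTej
        simp only [hS, Matrix.mul_apply]
        have : ∑ i, T j i * U i ⟨0, hNpos⟩ = (∑ i, T j i) * (Real.sqrt N)⁻¹ := by
          rw [Finset.sum_mul]
          exact Finset.sum_congr rfl fun i _ => by rw [hU0 i]
        rw [this, hTej, zero_mul]
      rw [hSj0]; ring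
    -- trace = ∑ lam k * c k
    have htr : (T * B * Tᵀ).trace = ∑ k, lam k * c k := by
      have hEq : T * B * Tᵀ = S * Matrix.diagonal lam * Sᵀ := by
        rw [hBU, hS, Matrix.transpose_mul]
        simp only [Matrix.mul_assoc]
      rw [hEq, aux_trace]
    have hchisum : ∑ k, chi k = d := by
      have := aux_shift (N := N) (d := d) hd hdN (fun _ => (1:ℝ))
      simp only [one_mul] at this
      rw [hchi]
      simp only [this, Finset.sum_const, Finset.card_univ, Fintype.card_fin, nsmul_eq_mul, mul_one]
    set mu : ℝ := lam ⟨d, by omega⟩ with hmu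
    have hterm : ∀ k : Fin N, 0 ≤ (lam k - mu) * (c k - chi k) := by
      intro k
      rcases Nat.lt_or_ge (k : ℕ) 1 with hk | hk
      · have hkv : (k:ℕ) = 0 := by omega
        have hk0 : k = ⟨0, hNpos⟩ := Fin.ext (by simp [hkv])
        have h1 : chi k = 0 := by simp only [hchi]; rw [if_neg (by omega)]
        have h2 : c k = 0 := by rw [hk0]; exact hczero
        rw [h1, h2]; simp
      · rcases le_or_gt (k:ℕ) d with hkd | hkd
        · have hchik : chi k = 1 := by simp only [hchi]; rw [if_pos ⟨hk, hkd⟩]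
          have hlamk : lam k ≤ mu := hmono (by simp [Fin.le_def]; omega)
          have := hc1 k
          nlinarith
        · have hchik : chi k = 0 := by simp only [hchi]; rw [if_neg (by omega)]
          have hlamk : mu ≤ lam k := hmono (by simp [Fin.le_def]; omega)
          have := hc0 k
          nlinarith
    have hsum_nonneg : 0 ≤ ∑ k, (lam k - mu) * (c k - chi k) :=
      Finset.sum_nonneg fun k _ => hterm k
    have hexpand : ∑ k, (lam k - mu) * (c k - chi k) =
        ∑ k, lam k * c k - ∑ k, lam k * chi k - mu * (∑ k, c k) + mu * (∑ k, chi k) := by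
      simp only [sub_mul, mul_sub, Finset.sum_sub_distrib, Finset.mul_sum]
      ring
    have hshift := aux_shift (N := N) (d := d) hd hdN lam
    rw [htr]
    have : ∑ j : Fin d, lam ⟨(j : ℕ) + 1, (Nat.succ_lt_succ j.isLt).trans_le hdN⟩ =
        ∑ k, lam k * chi k := by rw [hchi, hshift]
    rw [this]
    rw [hexpand, hcsum, hchisum] at hsum_nonneg
    linarith
  · -- attainment
    intro T hTdef
    have hTU : ∀ (j : Fin d) (k : Fin N),
        (T * U) j k = if (⟨(j:ℕ)+1, by omega⟩ : Fin N) = k then 1 else 0 := by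
      intro j k
      have := congrFun (congrFun hU ⟨(j:ℕ)+1, by omega⟩) k
      simp only [Matrix.mul_apply, Matrix.transpose_apply, Matrix.one_apply] at this ⊢
      rw [hTdef]
      simpa using this
    have hTT : T * Tᵀ = 1 := by
      ext j j'
      have := congrFun (congrFun hU ⟨(j:ℕ)+1, by omega⟩) ⟨(j':ℕ)+1, by omega⟩
      simp only [Matrix.mul_apply, Matrix.transpose_apply, Matrix.one_apply] at this ⊢
      rw [hTdef]
      simp only [Matrix.of_apply]
      rw [this]
      by_cases h : j = j'
      · subst h; simp
      · rw [if_neg (by simp [Fin.ext_iff]; omega), if_neg h]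
    have hTe : T *ᵥ (fun _ => (1 : ℝ)) = 0 := by
      funext j
      simp only [Matrix.mulVec, dotProduct, mul_one, Pi.zero_apply, hTdef, Matrix.of_apply]
      exact hcolsum ⟨(j:ℕ)+1, by omega⟩ (by simp)
    refine ⟨hTT, hTe, ?_⟩
    have hEq : T * B * Tᵀ = (T * U) * Matrix.diagonal lam * (T * U)ᵀ := by
      rw [hBU, Matrix.transpose_mul]
      simp only [Matrix.mul_assoc]
    rw [hEq, aux_trace]
    have hcolsq : ∀ k : Fin N, (∑ j : Fin d, ((T*U) j k)^2) = chi k := by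
      intro k
      simp only [hchi]
      by_cases hk : 1 ≤ (k:ℕ) ∧ (k:ℕ) ≤ d
      · rw [if_pos hk]
        obtain ⟨hk1, hk2⟩ := hk
        rw [Finset.sum_eq_single (⟨(k:ℕ)-1, by omega⟩ : Fin d)]
        · rw [hTU]; rw [if_pos (by ext; simp; omega)]; norm_num
        · intro j _ hj
          rw [hTU, if_neg (by simp [Fin.ext_iff]; intro h; exact hj (by ext; simp; omega))]
          norm_num
        · intro h; exact absurd (Finset.mem_univ _) h
      · rw [if_neg hk]
        refine Finset.sum_eq_zero fun j _ => ?_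
        rw [hTU, if_neg (by simp [Fin.ext_iff]; omega)]
        norm_num
    calc ∑ k, lam k * ∑ j : Fin d, ((T*U) j k)^2 = ∑ k, lam k * chi k := by
          exact Finset.sum_congr rfl fun k _ => by rw [hcolsq]
      _ = _ := by rw [hchi]; exact aux_shift hd hdN lam
end

section
/- Let x_i, x̄_i ∈ R^m, let Q_i be an m-by-d real matrix with orthonormal columns, let L_i be an invertible d-by-d real matrix, let τ_i, τ̄_i, τ_i* ∈ R^d, and let f : R^d → R^m be any map. Define ε_i* = x_i − f(τ_i*), ξ_i = (I_m − Q_i Q_i^T)(x_i − x̄_i), ε_i = τ_i − τ̄_i − L_i Q_i^T (x_i − x̄_i), and g(τ_i) = x̄_i + Q_i L_i^{-1}(τ_i − τ̄_i). Then ‖g(τ_i) − f(τ_i*)‖_2 ≤ ‖ε_i*‖_2 + ‖ξ_i‖_2 + ‖L_i^{-1} ε_i‖_2. -/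
open Matrix

/-- Euclidean (2-) norm of a vector in `ℝ^n`. -/
noncomputable def evnorm {n : ℕ} (v : Fin n → ℝ) : ℝ := Real.sqrt (∑ i, v i ^ 2)

lemma evnorm_eq_norm {n : ℕ} (v : Fin n → ℝ) :
    evnorm v = ‖(WithLp.equiv 2 (Fin n → ℝ)).symm v‖ := by
  rw [EuclideanSpace.norm_eq]
  simp [evnorm, sq_abs]

lemma evnorm_add_le {n : ℕ} (v w : Fin n → ℝ) :
    evnorm (v + w) ≤ evnorm v + evnorm w := by
  simp only [evnorm_eq_norm]
  rw [show (WithLp.equiv 2 (Fin n → ℝ)).symm (v + w) =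
      (WithLp.equiv 2 (Fin n → ℝ)).symm v + (WithLp.equiv 2 (Fin n → ℝ)).symm w from rfl]
  exact norm_add_le _ _

lemma evnorm_neg {n : ℕ} (v : Fin n → ℝ) : evnorm (-v) = evnorm v := by
  simp [evnorm]

lemma evnorm_mulVec {m d : ℕ} (Q : Matrix (Fin m) (Fin d) ℝ) (hQ : Qᵀ * Q = 1)
    (v : Fin d → ℝ) : evnorm (Q *ᵥ v) = evnorm v := by
  unfold evnorm
  congr 1
  have h1 : ∀ {k : ℕ} (w : Fin k → ℝ), ∑ i, w i ^ 2 = w ⬝ᵥ w := by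
    intro k w; simp [dotProduct, sq]
  rw [h1, h1]
  calc (Q *ᵥ v) ⬝ᵥ (Q *ᵥ v) = (v ᵥ* Qᵀ) ⬝ᵥ (Q *ᵥ v) := by rw [vecMul_transpose]
    _ = v ⬝ᵥ (Qᵀ *ᵥ (Q *ᵥ v)) := (dotProduct_mulVec v Qᵀ (Q *ᵥ v)).symm
    _ = v ⬝ᵥ v := by rw [mulVec_mulVec, hQ, one_mulVec]

/-- With `ε_i* = x_i − f(τ_i*)`, `ξ_i = (I − Q_i Q_iᵀ)(x_i − x̄_i)`,
`ε_i = τ_i − τ̄_i − L_i Q_iᵀ (x_i − x̄_i)` and `g(τ_i) = x̄_i + Q_i L_i⁻¹ (τ_i − τ̄_i)`,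
where `Q_i` has orthonormal columns and `L_i` is invertible, the reconstruction error
satisfies `‖g(τ_i) − f(τ_i*)‖₂ ≤ ‖ε_i*‖₂ + ‖ξ_i‖₂ + ‖L_i⁻¹ ε_i‖₂`. -/
theorem stmt_7 (m d : ℕ) (x xbar : Fin m → ℝ)
    (Q : Matrix (Fin m) (Fin d) ℝ) (hQ : Qᵀ * Q = 1)
    (L : Matrix (Fin d) (Fin d) ℝ) (hL : IsUnit L.det)
    (τ τbar τstar : Fin d → ℝ) (f : (Fin d → ℝ) → (Fin m → ℝ)) :
    evnorm ((xbar + Q *ᵥ (L⁻¹ *ᵥ (τ - τbar))) - f τstar) ≤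
      evnorm (x - f τstar) +
      evnorm ((x - xbar) - Q *ᵥ (Qᵀ *ᵥ (x - xbar))) +
      evnorm (L⁻¹ *ᵥ (τ - τbar - L *ᵥ (Qᵀ *ᵥ (x - xbar)))) := by
  have h1 : L⁻¹ *ᵥ (τ - τbar - L *ᵥ (Qᵀ *ᵥ (x - xbar))) =
      L⁻¹ *ᵥ (τ - τbar) - Qᵀ *ᵥ (x - xbar) := by
    rw [mulVec_sub, mulVec_mulVec, nonsing_inv_mul L hL, one_mulVec]
  have key : (xbar + Q *ᵥ (L⁻¹ *ᵥ (τ - τbar))) - f τstar =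
      (x - f τstar) + (-((x - xbar) - Q *ᵥ (Qᵀ *ᵥ (x - xbar)))) +
        Q *ᵥ (L⁻¹ *ᵥ (τ - τbar - L *ᵥ (Qᵀ *ᵥ (x - xbar)))) := by
    rw [h1]
    simp only [mulVec_sub, sub_mulVec]
    funext i
    simp only [Pi.add_apply, Pi.sub_apply, Pi.neg_apply]
    ring
  rw [key]
  calc evnorm _ ≤ evnorm ((x - f τstar) + (-((x - xbar) - Q *ᵥ (Qᵀ *ᵥ (x - xbar))))) +
        evnorm (Q *ᵥ (L⁻¹ *ᵥ (τ - τbar - L *ᵥ (Qᵀ *ᵥ (x - xbar))))) := evnorm_add_le _ _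
    _ ≤ (evnorm (x - f τstar) + evnorm (-((x - xbar) - Q *ᵥ (Qᵀ *ᵥ (x - xbar))))) +
        evnorm (Q *ᵥ (L⁻¹ *ᵥ (τ - τbar - L *ᵥ (Qᵀ *ᵥ (x - xbar))))) :=
        add_le_add (evnorm_add_le _ _) le_rfl
    _ = _ := by rw [evnorm_neg, evnorm_mulVec Q hQ]
end

section
/- Let X_i be an m-by-k real matrix, e the all-ones vector in R^k, Q_i an m-by-d real matrix with orthonormal columns, and Θ_i = Q_i^T X_i (I_k − (1/k) e e^T). Suppose X_i (I_k − (1/k) e e^T) = (J_i T_i* + Δ_i + E_i*)(I_k − (1/k) e e^T) for some m-by-d matrix J_i, d-by-k matrix T_i*, and m-by-k matrices Δ_i and E_i*, and suppose P_i = Q_i^T J_i is nonsingular. Then the candidate alignment error Ẽ_i = T_i*(I_k − (1/k) e e^T) − P_i^{-1} Θ_i satisfies the identity Ẽ_i = −P_i^{-1} Q_i^T (Δ_i + E_i*)(I_k − (1/k) e e^T), and consequently ‖Ẽ_i‖_F ≤ ‖P_i^{-1}‖_2 (‖Δ_i‖_F + ‖E_i*‖_F). -/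
open Matrix

/-- Spectral (operator 2-) norm of a real matrix. -/
noncomputable def spec {α β : Type*} [Fintype α] [Fintype β] [DecidableEq β]
    (A : Matrix α β ℝ) : ℝ :=
  ‖LinearMap.toContinuousLinearMap (Matrix.toEuclideanLin A)‖

section FrobBasics

attribute [local instance] Matrix.frobeniusNormedAddCommGroup

lemma frob_eq_norm {α β : Type*} [Fintype α] [Fintype β] (A : Matrix α β ℝ) :
    frob A = ‖A‖ := by
  rw [Matrix.frobenius_norm_def, frob, Real.sqrt_eq_rpow]
  congr 1
  simp [Real.norm_eq_abs, sq_abs]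

lemma frob_nonneg {α β : Type*} [Fintype α] [Fintype β] (A : Matrix α β ℝ) : 0 ≤ frob A :=
  Real.sqrt_nonneg _

lemma frob_neg {α β : Type*} [Fintype α] [Fintype β] (A : Matrix α β ℝ) : frob (-A) = frob A := by
  simp [frob_eq_norm]

lemma frob_add_le {α β : Type*} [Fintype α] [Fintype β] (A B : Matrix α β ℝ) :
    frob (A + B) ≤ frob A + frob B := by
  simp only [frob_eq_norm]; exact norm_add_le _ _

end FrobBasics

lemma frob_transpose {α β : Type*} [Fintype α] [Fintype β] (A : Matrix α β ℝ) :
    frob Aᵀ = frob A := by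
  rw [frob, frob, Finset.sum_comm]
  rfl

lemma spec_nonneg {α β : Type*} [Fintype α] [Fintype β] [DecidableEq β]
    (A : Matrix α β ℝ) : 0 ≤ spec A := norm_nonneg _

lemma euclid_norm {γ : Type*} [Fintype γ] (w : γ → ℝ) :
    ‖(WithLp.equiv 2 (γ → ℝ)).symm w‖ = Real.sqrt (∑ i, (w i) ^ 2) := by
  rw [EuclideanSpace.norm_eq]
  congr 1
  refine Finset.sum_congr rfl fun i _ => ?_
  simp [Real.norm_eq_abs, sq_abs]

lemma mulVec_sq_le {α β : Type*} [Fintype α] [Fintype β] [DecidableEq β]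
    (A : Matrix α β ℝ) (v : β → ℝ) :
    ∑ i, (A.mulVec v i) ^ 2 ≤ spec A ^ 2 * ∑ j, (v j) ^ 2 := by
  have h := (LinearMap.toContinuousLinearMap (Matrix.toEuclideanLin A)).le_opNorm
      ((WithLp.equiv 2 (β → ℝ)).symm v)
  have happ : (LinearMap.toContinuousLinearMap (Matrix.toEuclideanLin A))
      ((WithLp.equiv 2 (β → ℝ)).symm v) = (WithLp.equiv 2 (α → ℝ)).symm (A.mulVec v) := by
    simp [LinearMap.coe_toContinuousLinearMap']
  rw [happ] at h
  rw [euclid_norm, euclid_norm] at h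
  have h1 : (0:ℝ) ≤ Real.sqrt (∑ i, (A.mulVec v i)^2) := Real.sqrt_nonneg _
  have h2 := mul_self_le_mul_self h1 h
  rw [Real.mul_self_sqrt (by positivity)] at h2
  calc ∑ i, (A.mulVec v i) ^ 2 ≤ (spec A * Real.sqrt (∑ j, (v j)^2)) *
        (spec A * Real.sqrt (∑ j, (v j)^2)) := h2
    _ = spec A ^ 2 * ∑ j, (v j) ^ 2 := by
        rw [mul_mul_mul_comm, Real.mul_self_sqrt (by positivity)]; ring

lemma frob_mul_le {α β γ : Type*} [Fintype α] [Fintype β] [Fintype γ] [DecidableEq β]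
    (A : Matrix α β ℝ) (B : Matrix β γ ℝ) :
    frob (A * B) ≤ spec A * frob B := by
  have key : ∑ j, ∑ i, ((A * B) i j) ^ 2 ≤ spec A ^ 2 * ∑ j, ∑ i, (B i j) ^ 2 := by
    rw [Finset.mul_sum]
    apply Finset.sum_le_sum
    intro j _
    have : ∀ i, (A * B) i j = A.mulVec (fun l => B l j) i := by
      intro i; simp [Matrix.mul_apply, Matrix.mulVec, dotProduct]
    simp only [this]
    exact mulVec_sq_le A _
  rw [frob, frob, Finset.sum_comm]
  rw [show (∑ i, ∑ j, (B i j)^2) = ∑ j, ∑ i, (B i j)^2 from Finset.sum_comm]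
  calc Real.sqrt (∑ j, ∑ i, ((A*B) i j)^2) ≤ Real.sqrt (spec A ^2 * ∑ j, ∑ i, (B i j)^2) :=
        Real.sqrt_le_sqrt key
    _ = spec A * Real.sqrt (∑ j, ∑ i, (B i j)^2) := by
        rw [Real.sqrt_mul (by positivity), Real.sqrt_sq (spec_nonneg A)]

lemma dot_contract {n : Type*} [Fintype n] (x v : n → ℝ) (a : ℝ)
    (hxx : x ⬝ᵥ x = a) (hxv : x ⬝ᵥ v = a) : a ≤ v ⬝ᵥ v := by
  have cs := Finset.sum_mul_sq_le_sq_mul_sq Finset.univ x v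
  simp only [dotProduct] at hxx hxv ⊢
  have hx2 : ∑ i, x i ^ 2 = a := by
    rw [← hxx]; exact Finset.sum_congr rfl fun i _ => sq (x i)
  have hv2 : ∑ i, v i ^ 2 = ∑ i, v i * v i :=
    Finset.sum_congr rfl fun i _ => sq (v i)
  have ha : 0 ≤ a := by rw [← hx2]; positivity
  have hS : 0 ≤ ∑ i, v i * v i := by rw [← hv2]; positivity
  rw [hxv, hx2, hv2] at cs
  rcases eq_or_lt_of_le ha with h0 | h0
  · rw [← h0]; exact hS
  · nlinarith

lemma contract_Qt {m d : ℕ} (Q : Matrix (Fin m) (Fin d) ℝ) (hQ : Qᵀ * Q = 1)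
    (v : Fin m → ℝ) : (Qᵀ *ᵥ v) ⬝ᵥ (Qᵀ *ᵥ v) ≤ v ⬝ᵥ v := by
  set u := Qᵀ *ᵥ v with hu
  refine dot_contract (Q *ᵥ u) v (u ⬝ᵥ u) ?_ ?_
  · rw [Matrix.dotProduct_mulVec, ← Matrix.mulVec_transpose, Matrix.mulVec_mulVec, hQ,
      Matrix.one_mulVec]
  · rw [dotProduct_comm, Matrix.dotProduct_mulVec, ← Matrix.mulVec_transpose, ← hu]

lemma contract_sym_idem {k : ℕ} (C : Matrix (Fin k) (Fin k) ℝ) (hCt : Cᵀ = C)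
    (hCC : C * C = C) (v : Fin k → ℝ) :
    (C *ᵥ v) ⬝ᵥ (C *ᵥ v) ≤ v ⬝ᵥ v := by
  refine dot_contract (C *ᵥ v) v ((C *ᵥ v) ⬝ᵥ (C *ᵥ v)) rfl ?_
  symm
  rw [Matrix.dotProduct_mulVec, ← Matrix.mulVec_transpose, Matrix.mulVec_mulVec, hCt, hCC]

lemma frob_lmul_le_of {α β γ : Type*} [Fintype α] [Fintype β] [Fintype γ]
    (A : Matrix α β ℝ) (h : ∀ v : β → ℝ, (A *ᵥ v) ⬝ᵥ (A *ᵥ v) ≤ v ⬝ᵥ v)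
    (M : Matrix β γ ℝ) : frob (A * M) ≤ frob M := by
  rw [frob, frob, Finset.sum_comm,
    show (∑ i : β, ∑ j, (M i j)^2) = ∑ j, ∑ i, (M i j)^2 from Finset.sum_comm]
  apply Real.sqrt_le_sqrt
  apply Finset.sum_le_sum
  intro j _
  have h' := h (fun l => M l j)
  simp only [dotProduct, Matrix.mulVec, Matrix.mul_apply] at h' ⊢
  calc ∑ i, (∑ l, A i l * M l j) ^ 2
      = ∑ i, (fun i => ∑ l, A i l * M l j) i * (fun i => ∑ l, A i l * M l j) i := by
        refine Finset.sum_congr rfl fun i _ => sq _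
    _ ≤ ∑ l, M l j * M l j := h'
    _ = ∑ l, (M l j) ^ 2 := Finset.sum_congr rfl fun l _ => (sq _).symm

lemma C_props {k : ℕ} (C : Matrix (Fin k) (Fin k) ℝ)
    (hC : C = (1 : Matrix (Fin k) (Fin k) ℝ) -
        (k : ℝ)⁻¹ • vecMulVec (fun _ => (1 : ℝ)) (fun _ => (1 : ℝ))) :
    Cᵀ = C ∧ C * C = C := by
  set M : Matrix (Fin k) (Fin k) ℝ := vecMulVec (fun _ => (1:ℝ)) (fun _ => (1:ℝ)) with hM
  have hMt : Mᵀ = M := by ext i j; simp [hM, vecMulVec_apply]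
  have hMM : M * M = (k : ℝ) • M := by
    ext i j
    simp [hM, Matrix.mul_apply, vecMulVec_apply, Matrix.smul_apply]
  constructor
  · rw [hC, transpose_sub, transpose_one, transpose_smul, hMt]
  · rw [hC, sub_mul, one_mul, mul_sub, mul_one, Matrix.smul_mul, Matrix.mul_smul, hMM,
      smul_smul, smul_smul]
    have hck : (k:ℝ)⁻¹ * (k:ℝ)⁻¹ * (k:ℝ) = (k:ℝ)⁻¹ := by
      rcases Nat.eq_zero_or_pos k with h0 | h0
      · simp [h0]
      · field_simp
    rw [hck]
    abel

set_option maxHeartbeats 1000000 in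
/-- With `C = I − (1/k) e eᵀ`, `Θ = Qᵀ X C`, assuming
`X C = (J T* + Δ + E*) C` and that `P = Qᵀ J` is nonsingular, the candidate alignment
error `Ẽ = T* C − P⁻¹ Θ` satisfies `Ẽ = −P⁻¹ Qᵀ (Δ + E*) C` and hence
`‖Ẽ‖_F ≤ ‖P⁻¹‖₂ (‖Δ‖_F + ‖E*‖_F)`. -/
theorem stmt_8 (m d k : ℕ)
    (X : Matrix (Fin m) (Fin k) ℝ)
    (Q : Matrix (Fin m) (Fin d) ℝ) (hQ : Qᵀ * Q = 1)
    (J : Matrix (Fin m) (Fin d) ℝ) (Tstar : Matrix (Fin d) (Fin k) ℝ)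
    (Δ Estar : Matrix (Fin m) (Fin k) ℝ)
    (C : Matrix (Fin k) (Fin k) ℝ)
    (hC : C = (1 : Matrix (Fin k) (Fin k) ℝ) -
        (k : ℝ)⁻¹ • vecMulVec (fun _ => (1 : ℝ)) (fun _ => (1 : ℝ)))
    (hX : X * C = (J * Tstar + Δ + Estar) * C)
    (hP : IsUnit (Qᵀ * J).det) :
    Tstar * C - (Qᵀ * J)⁻¹ * (Qᵀ * X * C) =
        -((Qᵀ * J)⁻¹ * Qᵀ * (Δ + Estar) * C) ∧
    frob (Tstar * C - (Qᵀ * J)⁻¹ * (Qᵀ * X * C)) ≤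
      spec ((Qᵀ * J)⁻¹) * (frob Δ + frob Estar) := by
  obtain ⟨hCt, hCC⟩ := C_props C hC
  have hinv : (Qᵀ * J)⁻¹ * (Qᵀ * J) = 1 := Matrix.nonsing_inv_mul _ hP
  have key : Qᵀ * X * C = (Qᵀ * J) * (Tstar * C) + Qᵀ * ((Δ + Estar) * C) := by
    rw [Matrix.mul_assoc Qᵀ X C, hX]
    simp only [Matrix.add_mul, Matrix.mul_add, Matrix.mul_assoc]
    abel
  have hid : Tstar * C - (Qᵀ * J)⁻¹ * (Qᵀ * X * C) =
      -((Qᵀ * J)⁻¹ * Qᵀ * (Δ + Estar) * C) := by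
    rw [key, Matrix.mul_add, ← Matrix.mul_assoc, hinv, Matrix.one_mul]
    rw [Matrix.mul_assoc ((Qᵀ * J)⁻¹ * Qᵀ) (Δ + Estar) C, Matrix.mul_assoc (Qᵀ * J)⁻¹ Qᵀ _]
    rw [sub_add_eq_sub_sub, sub_self, zero_sub]
  refine ⟨hid, ?_⟩
  rw [hid, frob_neg]
  have step1 : frob ((Qᵀ * J)⁻¹ * Qᵀ * (Δ + Estar) * C) ≤
      spec ((Qᵀ * J)⁻¹) * frob (Qᵀ * ((Δ + Estar) * C)) := by
    rw [Matrix.mul_assoc ((Qᵀ * J)⁻¹ * Qᵀ) (Δ + Estar) C, Matrix.mul_assoc (Qᵀ * J)⁻¹ Qᵀ _]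
    exact frob_mul_le _ _
  have step2 : frob (Qᵀ * ((Δ + Estar) * C)) ≤ frob ((Δ + Estar) * C) :=
    frob_lmul_le_of Qᵀ (contract_Qt Q hQ) _
  have step3 : frob ((Δ + Estar) * C) ≤ frob (Δ + Estar) := by
    calc frob ((Δ + Estar) * C) = frob (((Δ + Estar) * C)ᵀ) := (frob_transpose _).symm
      _ = frob (C * (Δ + Estar)ᵀ) := by rw [Matrix.transpose_mul, hCt]
      _ ≤ frob ((Δ + Estar)ᵀ) := frob_lmul_le_of C (contract_sym_idem C hCt hCC) _
      _ = frob (Δ + Estar) := frob_transpose _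
  have step4 : frob (Δ + Estar) ≤ frob Δ + frob Estar := frob_add_le _ _
  calc frob ((Qᵀ * J)⁻¹ * Qᵀ * (Δ + Estar) * C)
      ≤ spec ((Qᵀ * J)⁻¹) * frob (Qᵀ * ((Δ + Estar) * C)) := step1
    _ ≤ spec ((Qᵀ * J)⁻¹) * (frob Δ + frob Estar) := by
        apply mul_le_mul_of_nonneg_left _ (spec_nonneg _)
        exact le_trans step2 (le_trans step3 step4)
end

section
/- Let U = [U_1, U_2] be an m-by-m real orthogonal matrix with U_1 consisting of its first d columns, let H be an (m−d)-by-d real matrix, and define Q = (U_1 + U_2 H)(I_d + H^T H)^{-1/2}. Let J = U_1 M for an invertible d-by-d real matrix M, and set P = Q^T J. Then P = (I_d + H^T H)^{-1/2} M, P is invertible, and ‖P^{-1}‖_F ≤ (1 + ‖H‖_F^2)^{1/2} ‖M^{-1}‖_F. (Since J = U_1 M with U_1 orthonormal, ‖M^{-1}‖_F equals the Frobenius norm of the Moore–Penrose pseudoinverse of J.) -/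
open Matrix

lemma frobSq_eq_trace {α β : Type*} [Fintype α] [Fintype β] (A : Matrix α β ℝ) :
    ∑ i, ∑ j, (A i j) ^ 2 = (Aᵀ * A).trace := by
  simp only [Matrix.trace, Matrix.mul_apply, Matrix.diag, Matrix.transpose_apply, ← sq]
  exact Finset.sum_comm

lemma frobSq_mul_le {α β γ : Type*} [Fintype α] [Fintype β] [Fintype γ]
    (A : Matrix α β ℝ) (B : Matrix β γ ℝ) :
    ∑ i, ∑ j, ((A * B) i j) ^ 2 ≤ (∑ i, ∑ j, (A i j) ^ 2) * (∑ i, ∑ j, (B i j) ^ 2) := by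
  calc ∑ i, ∑ j, ((A * B) i j) ^ 2
      ≤ ∑ i, ∑ j, (∑ k, (A i k) ^ 2) * (∑ k, (B k j) ^ 2) := by
        gcongr with i _ j _
        rw [Matrix.mul_apply]
        exact Finset.sum_mul_sq_le_sq_mul_sq Finset.univ _ _
    _ = (∑ i, ∑ k, (A i k) ^ 2) * (∑ j, ∑ k, (B k j) ^ 2) := by
        simp_rw [← Finset.mul_sum]
        rw [← Finset.sum_mul]
    _ = (∑ i, ∑ j, (A i j) ^ 2) * (∑ i, ∑ j, (B i j) ^ 2) := by
        congr 1
        exact Finset.sum_comm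


/-- Let `[U₁, U₂]` be orthogonal, `Sq` the unique symmetric positive definite square root
of `I + Hᵀ H` (so that `Sq⁻¹ = (I + Hᵀ H)^{-1/2}`), `Q = (U₁ + U₂ H) Sq⁻¹`, `J = U₁ M`
with `M` invertible, and `P = Qᵀ J`.  Then `P = (I + Hᵀ H)^{-1/2} M`, `P` is invertible,
and `‖P⁻¹‖_F ≤ (1 + ‖H‖_F²)^{1/2} ‖M⁻¹‖_F`. -/
theorem stmt_12 (m d : ℕ) (hdm : d ≤ m)
    (U1 : Matrix (Fin m) (Fin d) ℝ) (U2 : Matrix (Fin m) (Fin (m - d)) ℝ)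
    (hU1 : U1ᵀ * U1 = 1) (hU2 : U2ᵀ * U2 = 1) (hU12 : U1ᵀ * U2 = 0)
    (H : Matrix (Fin (m - d)) (Fin d) ℝ)
    (Sq : Matrix (Fin d) (Fin d) ℝ) (hSqpd : Sq.PosDef)
    (hSq : Sq * Sq = 1 + Hᵀ * H)
    (M : Matrix (Fin d) (Fin d) ℝ) (hM : IsUnit M.det)
    (Q : Matrix (Fin m) (Fin d) ℝ) (hQ : Q = (U1 + U2 * H) * Sq⁻¹)
    (P : Matrix (Fin d) (Fin d) ℝ) (hP : P = Qᵀ * (U1 * M)) :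
    P = Sq⁻¹ * M ∧ IsUnit P.det ∧
      frob P⁻¹ ≤ Real.sqrt (1 + frob H ^ 2) * frob M⁻¹ := by
  have hSqT : Sqᵀ = Sq := by simpa using hSqpd.1.eq
  have hSqu : IsUnit Sq.det := isUnit_iff_ne_zero.2 (ne_of_gt hSqpd.det_pos)
  have h21 : U2ᵀ * U1 = 0 := by
    have := congrArg Matrix.transpose hU12
    simpa using this
  have hPeq : P = Sq⁻¹ * M := by
    rw [hP, hQ]
    rw [Matrix.transpose_mul, Matrix.transpose_nonsing_inv, hSqT, Matrix.transpose_add,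
      Matrix.transpose_mul]
    rw [Matrix.mul_assoc, ← Matrix.mul_assoc (U1ᵀ + Hᵀ * U2ᵀ)]
    rw [Matrix.add_mul, hU1, Matrix.mul_assoc Hᵀ, h21]
    simp [Matrix.mul_assoc]
  have hPu : IsUnit P.det := by
    rw [hPeq, Matrix.det_mul]
    exact (Matrix.isUnit_nonsing_inv_det Sq hSqu).mul hM
  refine ⟨hPeq, hPu, ?_⟩
  set A := M⁻¹ with hA
  have hPinv : P⁻¹ = A * Sq := by
    rw [hPeq, Matrix.mul_inv_rev, Matrix.nonsing_inv_nonsing_inv Sq hSqu]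
  -- trace identity
  have key : ∑ i, ∑ j, ((A * Sq) i j) ^ 2
      = (∑ i, ∑ j, (A i j) ^ 2) + ∑ i, ∑ j, ((A * Hᵀ) i j) ^ 2 := by
    rw [frobSq_eq_trace, frobSq_eq_trace, frobSq_eq_trace]
    have h1 : (A * Sq)ᵀ * (A * Sq) = Sq * ((Aᵀ * A) * Sq) := by
      rw [Matrix.transpose_mul, hSqT]
      noncomm_ring
    rw [h1, Matrix.trace_mul_comm, Matrix.mul_assoc, hSq]
    have h2 : Aᵀ * A * ((1 + Hᵀ * H)) = Aᵀ * A + (Aᵀ * A) * (Hᵀ * H) := by noncomm_ring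
    rw [← Matrix.mul_assoc, h2, Matrix.trace_add]
    simp only [Matrix.transpose_mul, Matrix.transpose_transpose, Matrix.mul_assoc]
    rw [Matrix.trace_mul_comm H]
    simp only [Matrix.mul_assoc]
  have hHsq : frob H ^ 2 = ∑ i, ∑ j, (H i j) ^ 2 :=
    Real.sq_sqrt (by positivity)
  have hbound : ∑ i, ∑ j, ((A * Sq) i j) ^ 2
      ≤ (1 + frob H ^ 2) * (∑ i, ∑ j, (A i j) ^ 2) := by
    rw [key, hHsq]
    have hcs := frobSq_mul_le A Hᵀ
    have hHT : ∑ i, ∑ j, (Hᵀ i j) ^ 2 = ∑ i, ∑ j, (H i j) ^ 2 := by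
      simp only [Matrix.transpose_apply]
      exact Finset.sum_comm
    rw [hHT] at hcs
    linarith
  rw [hPinv]
  unfold frob
  rw [← Real.sqrt_mul (by positivity) ]
  exact Real.sqrt_le_sqrt hbound
end

section
/- Let X be an m-by-k real matrix, e the all-ones vector in R^k, and x̄ = (1/k) X e. Suppose X (I_k − (1/k) e e^T) = J̃ + Φ, where J̃ = U_1 Σ V^T has rank d with U_1 an m-by-d matrix forming the first d columns of an orthogonal matrix [U_1, U_2], Σ a d-by-d invertible diagonal matrix with largest diagonal entry σ_1 and smallest diagonal entry σ_d > 0, V a k-by-d matrix with orthonormal columns, and ‖Φ‖_F ≤ ε for some ε ≥ 0. Suppose further that the m-by-d matrix Q admits the representation Q = (U_1 + U_2 H)(I_d + H^T H)^{-1/2} for some (m−d)-by-d matrix H with ‖H‖_F ≤ α, where α = 4ε/σ_d. Let Θ = Q^T X (I_k − (1/k) e e^T). Then the local tangent space approximation error satisfies ‖X − (x̄ e^T + Q Θ)‖_F ≤ (1 + 4(1 + α^2) κ) ε, where κ = σ_1/σ_d is the spectral condition number of J̃. -/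
open Matrix

section Aux

attribute [local instance] Matrix.frobeniusSeminormedAddCommGroup

set_option linter.unusedSectionVars false

variable {l m n d : Type*} [Fintype l] [Fintype m] [Fintype n] [Fintype d]

lemma frob_eq_norm_s14 (A : Matrix m n ℝ) : frob A = ‖A‖ := by
  rw [frob, Matrix.frobenius_norm_def, Real.sqrt_eq_rpow]
  congr 1
  refine Finset.sum_congr rfl fun i _ => Finset.sum_congr rfl fun j _ => ?_
  rw [Real.rpow_two, Real.norm_eq_abs, sq_abs]

lemma frob_nonneg_s14 (A : Matrix m n ℝ) : 0 ≤ frob A := Real.sqrt_nonneg _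

lemma frob_sq (A : Matrix m n ℝ) : frob A ^ 2 = Matrix.trace (Aᵀ * A) := by
  have h : (0:ℝ) ≤ ∑ i, ∑ j, A i j ^ 2 := by positivity
  rw [frob, Real.sq_sqrt h, Matrix.trace]
  simp only [Matrix.diag_apply, Matrix.mul_apply, Matrix.transpose_apply]
  rw [Finset.sum_comm]
  simp [sq]

lemma frob_eq_sqrt_trace (A : Matrix m n ℝ) :
    frob A = Real.sqrt (Matrix.trace (Aᵀ * A)) := by
  rw [← frob_sq, Real.sqrt_sq (frob_nonneg_s14 A)]

lemma tr_nonneg (A : Matrix m n ℝ) : 0 ≤ Matrix.trace (Aᵀ * A) := by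
  rw [← frob_sq]; positivity

lemma frob_le_of_trace_le {A : Matrix m n ℝ} {B : Matrix l n ℝ}
    (h : Matrix.trace (Aᵀ * A) ≤ Matrix.trace (Bᵀ * B)) : frob A ≤ frob B := by
  rw [frob_eq_sqrt_trace, frob_eq_sqrt_trace]
  exact Real.sqrt_le_sqrt h

lemma frob_mul_le_s14 (A : Matrix l m ℝ) (B : Matrix m n ℝ) :
    frob (A * B) ≤ frob A * frob B := by
  rw [frob_eq_norm_s14, frob_eq_norm_s14, frob_eq_norm_s14]
  exact Matrix.frobenius_norm_mul A B

lemma frob_transpose_s14 (A : Matrix m n ℝ) : frob Aᵀ = frob A := by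
  rw [frob_eq_norm_s14, frob_eq_norm_s14]; exact Matrix.frobenius_norm_transpose A

/-- multiplying on the right by a matrix with orthonormal rows preserves Frobenius norm -/
lemma frob_mul_orth [DecidableEq d] (M : Matrix m d ℝ) (V : Matrix n d ℝ) (hV : Vᵀ * V = 1) :
    frob (M * Vᵀ) = frob M := by
  rw [frob_eq_sqrt_trace, frob_eq_sqrt_trace]
  congr 1
  calc Matrix.trace ((M * Vᵀ)ᵀ * (M * Vᵀ))
      = Matrix.trace (V * (Mᵀ * M * Vᵀ)) := by
        rw [transpose_mul, transpose_transpose]; simp only [Matrix.mul_assoc]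
    _ = Matrix.trace (Mᵀ * M * Vᵀ * V) := Matrix.trace_mul_comm _ _
    _ = Matrix.trace (Mᵀ * M) := by rw [Matrix.mul_assoc, hV, Matrix.mul_one]

lemma frob_mul_diagonal_le [DecidableEq d] (M : Matrix m d ℝ) (σ : d → ℝ) (s1 : ℝ)
    (hs1 : 0 ≤ s1) (h0 : ∀ j, 0 ≤ σ j) (h1 : ∀ j, σ j ≤ s1) :
    frob (M * Matrix.diagonal σ) ≤ s1 * frob M := by
  rw [frob, frob]
  have h : ∑ i, ∑ j, (M * Matrix.diagonal σ) i j ^ 2 ≤ s1 ^ 2 * ∑ i, ∑ j, M i j ^ 2 := by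
    rw [Finset.mul_sum]
    refine Finset.sum_le_sum fun i _ => ?_
    rw [Finset.mul_sum]
    refine Finset.sum_le_sum fun j _ => ?_
    rw [Matrix.mul_diagonal, mul_pow]
    have h1j := h1 j; have h0j := h0 j
    have hsq : σ j ^ 2 ≤ s1 ^ 2 := pow_le_pow_left₀ h0j h1j 2
    nlinarith [sq_nonneg (M i j)]
  calc Real.sqrt (∑ i, ∑ j, (M * Matrix.diagonal σ) i j ^ 2)
      ≤ Real.sqrt (s1 ^ 2 * ∑ i, ∑ j, M i j ^ 2) := Real.sqrt_le_sqrt h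
    _ = s1 * Real.sqrt (∑ i, ∑ j, M i j ^ 2) := by
        rw [Real.sqrt_mul (by positivity), Real.sqrt_sq hs1]

lemma frob_proj_le [DecidableEq m] [DecidableEq d] (Q : Matrix m d ℝ) (hQ : Qᵀ * Q = 1) (Φ : Matrix m n ℝ) :
    frob ((1 - Q * Qᵀ) * Φ) ≤ frob Φ := by
  have expand : (1 - Q * Qᵀ)ᵀ * (1 - Q * Qᵀ) = 1 - Q * Qᵀ := by
    rw [transpose_sub, transpose_one, transpose_mul, transpose_transpose]
    simp only [Matrix.sub_mul, Matrix.mul_sub, Matrix.one_mul, Matrix.mul_one]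
    have h : Q * Qᵀ * (Q * Qᵀ) = Q * Qᵀ := by
      rw [Matrix.mul_assoc, ← Matrix.mul_assoc Qᵀ Q Qᵀ, hQ, Matrix.one_mul]
    rw [h]; abel
  have h1 : ((1 - Q * Qᵀ) * Φ)ᵀ * ((1 - Q * Qᵀ) * Φ) = Φᵀ * Φ - (Qᵀ * Φ)ᵀ * (Qᵀ * Φ) := by
    rw [transpose_mul]
    calc Φᵀ * (1 - Q * Qᵀ)ᵀ * ((1 - Q * Qᵀ) * Φ)
        = Φᵀ * (((1 - Q * Qᵀ)ᵀ * (1 - Q * Qᵀ)) * Φ) := by simp only [Matrix.mul_assoc]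
      _ = Φᵀ * ((1 - Q * Qᵀ) * Φ) := by rw [expand]
      _ = Φᵀ * Φ - Φᵀ * (Q * (Qᵀ * Φ)) := by
          rw [Matrix.sub_mul, Matrix.one_mul, Matrix.mul_sub]
          simp only [Matrix.mul_assoc]
      _ = Φᵀ * Φ - (Qᵀ * Φ)ᵀ * (Qᵀ * Φ) := by
          rw [transpose_mul, transpose_transpose, Matrix.mul_assoc]
  refine frob_le_of_trace_le ?_
  rw [h1, Matrix.trace_sub]
  have := tr_nonneg (Qᵀ * Φ)
  linarith

end Aux

section Main

attribute [local instance] Matrix.frobeniusSeminormedAddCommGroup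

set_option maxHeartbeats 1000000 in
/-- Local tangent space approximation error bound.  With `x̄ = (1/k) X e`,
`X (I − (1/k) e eᵀ) = J̃ + Φ`, `J̃ = U₁ Σ Vᵀ` of rank `d` (where `Σ = diag(σ)` with
largest entry `σ₁` and smallest entry `σ_d > 0`, `[U₁, U₂]` orthogonal, `V` with
orthonormal columns), `‖Φ‖_F ≤ ε`, and `Q = (U₁ + U₂ H)(I + Hᵀ H)^{-1/2}` with
`‖H‖_F ≤ α = 4ε/σ_d`, setting `Θ = Qᵀ X (I − (1/k) e eᵀ)` one has
`‖X − (x̄ eᵀ + Q Θ)‖_F ≤ (1 + 4 (1 + α²) κ) ε` where `κ = σ₁/σ_d`. -/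
theorem stmt_14 (m d k : ℕ) (hk : 0 < k) (hdm : d ≤ m)
    (X : Matrix (Fin m) (Fin k) ℝ)
    (xbar : Fin m → ℝ) (hxbar : xbar = fun i => (k : ℝ)⁻¹ * ∑ j, X i j)
    (C : Matrix (Fin k) (Fin k) ℝ)
    (hC : C = (1 : Matrix (Fin k) (Fin k) ℝ) -
        (k : ℝ)⁻¹ • vecMulVec (fun _ => (1 : ℝ)) (fun _ => (1 : ℝ)))
    (U1 : Matrix (Fin m) (Fin d) ℝ) (U2 : Matrix (Fin m) (Fin (m - d)) ℝ)
    (hU1 : U1ᵀ * U1 = 1) (hU2 : U2ᵀ * U2 = 1) (hU12 : U1ᵀ * U2 = 0)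
    (σ : Fin d → ℝ) (σ1 σd : ℝ)
    (hσ1ub : ∀ j, σ j ≤ σ1) (hσ1mem : ∃ j, σ j = σ1)
    (hσdlb : ∀ j, σd ≤ σ j) (hσdmem : ∃ j, σ j = σd) (hσdpos : 0 < σd)
    (V : Matrix (Fin k) (Fin d) ℝ) (hV : Vᵀ * V = 1)
    (Φ : Matrix (Fin m) (Fin k) ℝ)
    (hXC : X * C = U1 * Matrix.diagonal σ * Vᵀ + Φ)
    (ε : ℝ) (hε : 0 ≤ ε) (hΦ : frob Φ ≤ ε)
    (H : Matrix (Fin (m - d)) (Fin d) ℝ)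
    (Sq : Matrix (Fin d) (Fin d) ℝ) (hSqpd : Sq.PosDef)
    (hSq : Sq * Sq = 1 + Hᵀ * H)
    (Q : Matrix (Fin m) (Fin d) ℝ) (hQ : Q = (U1 + U2 * H) * Sq⁻¹)
    (α : ℝ) (hα : α = 4 * ε / σd) (hH : frob H ≤ α)
    (Θ : Matrix (Fin d) (Fin k) ℝ) (hΘ : Θ = Qᵀ * X * C) :
    frob (X - (vecMulVec xbar (fun _ => (1 : ℝ)) + Q * Θ)) ≤
      (1 + 4 * (1 + α ^ 2) * (σ1 / σd)) * ε := by
  classical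
  obtain ⟨jd, hjd⟩ := hσdmem
  have hσ1pos : 0 < σ1 := lt_of_lt_of_le hσdpos (hjd ▸ hσ1ub jd)
  have hσ0 : ∀ j, 0 ≤ σ j := fun j => le_trans hσdpos.le (hσdlb j)
  have hα0 : 0 ≤ α := by rw [hα]; positivity
  -- symmetric square root facts
  have hSymm : Sqᵀ = Sq := by
    have h := hSqpd.isHermitian
    ext i j
    have h2 := congrFun (congrFun h i) j
    simpa [Matrix.conjTranspose_apply] using h2
  have hdet : IsUnit Sq.det := hSqpd.det_pos.ne'.isUnit
  set T : Matrix (Fin d) (Fin d) ℝ := Sq⁻¹ with hT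
  have hST : Sq * T = 1 := Matrix.mul_nonsing_inv _ hdet
  have hTS : T * Sq = 1 := Matrix.nonsing_inv_mul _ hdet
  have hTsymm : Tᵀ = T := by rw [hT, Matrix.transpose_nonsing_inv, hSymm]
  have hU21 : U2ᵀ * U1 = (0 : Matrix (Fin (m-d)) (Fin d) ℝ) := by
    have h := congrArg Matrix.transpose hU12
    simpa [Matrix.transpose_mul] using h
  have hSS : (Sq * Sq) * (T * T) = 1 := by
    rw [Matrix.mul_assoc, ← Matrix.mul_assoc Sq T T, hST, Matrix.one_mul, hST]
  have hQtrans : Qᵀ = T * (U1 + U2 * H)ᵀ := by rw [hQ, transpose_mul, hTsymm]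
  have hGram : (U1 + U2 * H)ᵀ * (U1 + U2 * H) = Sq * Sq := by
    rw [transpose_add, transpose_mul]
    rw [Matrix.add_mul, Matrix.mul_add, Matrix.mul_add]
    rw [hU1, ← Matrix.mul_assoc U1ᵀ U2 H, hU12, Matrix.zero_mul]
    rw [Matrix.mul_assoc Hᵀ U2ᵀ U1, hU21, Matrix.mul_zero]
    rw [Matrix.mul_assoc Hᵀ U2ᵀ (U2 * H), ← Matrix.mul_assoc U2ᵀ U2 H, hU2, Matrix.one_mul]
    rw [hSq]
    abel
  have hQQ : Qᵀ * Q = 1 := by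
    rw [hQtrans, hQ]
    calc T * (U1 + U2 * H)ᵀ * ((U1 + U2 * H) * T)
        = T * (((U1 + U2 * H)ᵀ * (U1 + U2 * H)) * T) := by simp only [Matrix.mul_assoc]
      _ = T * ((Sq * Sq) * T) := by rw [hGram]
      _ = 1 := by rw [Matrix.mul_assoc Sq Sq T, hST, Matrix.mul_one, hTS]
  have hQU1 : Qᵀ * U1 = T := by
    rw [hQtrans, Matrix.mul_assoc, transpose_add, transpose_mul, Matrix.add_mul, hU1,
      Matrix.mul_assoc Hᵀ U2ᵀ U1, hU21, Matrix.mul_zero, add_zero, Matrix.mul_one]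
  have hProjU1 : (1 - Q * Qᵀ) * U1 = -((U2 - U1 * Hᵀ) * (H * (T * T))) := by
    have h1 : (1 - Q * Qᵀ) * U1 = U1 - (U1 + U2 * H) * (T * T) := by
      rw [Matrix.sub_mul, Matrix.one_mul, Matrix.mul_assoc, hQU1, hQ, Matrix.mul_assoc]
    have hkey : (1 : Matrix (Fin d) (Fin d) ℝ) - T * T = Hᵀ * H * (T * T) := by
      calc (1 : Matrix (Fin d) (Fin d) ℝ) - T * T
          = (Sq * Sq) * (T * T) - 1 * (T * T) := by rw [hSS, Matrix.one_mul]
        _ = (Sq * Sq - 1) * (T * T) := by rw [Matrix.sub_mul]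
        _ = Hᵀ * H * (T * T) := by rw [hSq]; congr 1; abel
    rw [h1]
    calc U1 - (U1 + U2 * H) * (T * T)
        = U1 * (1 - T * T) - U2 * (H * (T * T)) := by
          rw [Matrix.add_mul, Matrix.mul_sub, Matrix.mul_one, Matrix.mul_assoc U2 H (T * T)]
          abel
      _ = U1 * (Hᵀ * (H * (T * T))) - U2 * (H * (T * T)) := by
          rw [hkey, Matrix.mul_assoc Hᵀ H (T * T)]
      _ = -((U2 - U1 * Hᵀ) * (H * (T * T))) := by
          rw [Matrix.sub_mul, neg_sub, Matrix.mul_assoc U1 Hᵀ (H * (T * T))]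
  -- centering identity
  have hXCsub : X * C = X - vecMulVec xbar (fun _ => (1 : ℝ)) := by
    ext i j
    rw [hC, hxbar]
    simp only [Matrix.mul_apply, Matrix.sub_apply, Matrix.smul_apply, Matrix.one_apply,
      vecMulVec_apply, smul_eq_mul, mul_one]
    simp only [mul_sub, mul_ite, mul_one, mul_zero, Finset.sum_sub_distrib,
      Finset.sum_ite_eq', Finset.mem_univ, if_true, ← Finset.sum_mul]
    ring
  -- the error matrix
  have hE : X - (vecMulVec xbar (fun _ => (1 : ℝ)) + Q * Θ) =
      -((U2 - U1 * Hᵀ) * (H * (T * T)) * Matrix.diagonal σ * Vᵀ) + (1 - Q * Qᵀ) * Φ := by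
    have hQΘ : Q * Θ = (Q * Qᵀ) * (X * C) := by rw [hΘ]; simp only [Matrix.mul_assoc]
    have e1 : X - (vecMulVec xbar (fun _ => (1 : ℝ)) + Q * Θ) = (1 - Q * Qᵀ) * (X * C) := by
      rw [hQΘ, Matrix.sub_mul, Matrix.one_mul, hXCsub]
      abel
    rw [e1, hXC, Matrix.mul_add]
    congr 1
    calc (1 - Q * Qᵀ) * (U1 * Matrix.diagonal σ * Vᵀ)
        = ((1 - Q * Qᵀ) * U1) * Matrix.diagonal σ * Vᵀ := by
          rw [← Matrix.mul_assoc, ← Matrix.mul_assoc]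
      _ = -((U2 - U1 * Hᵀ) * (H * (T * T)) * Matrix.diagonal σ * Vᵀ) := by
          rw [hProjU1, Matrix.neg_mul, Matrix.neg_mul]
  -- frob (H * (T*T)) ≤ frob H
  have key1 : Hᵀ*H*(T*T) + Hᵀ*H*(Hᵀ*H*(T*T)) = Hᵀ*H := by
    calc Hᵀ*H*(T*T) + Hᵀ*H*(Hᵀ*H*(T*T))
        = Hᵀ*H*((1 + Hᵀ*H)*(T*T)) := by
          rw [Matrix.add_mul, Matrix.one_mul, Matrix.mul_add]
      _ = Hᵀ*H := by rw [← hSq, hSS, Matrix.mul_one]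
  have key2 : Hᵀ*H*((T*T)*(T*T)) + Hᵀ*H*(Hᵀ*H*((T*T)*(T*T))) = Hᵀ*H*(T*T) := by
    calc Hᵀ*H*((T*T)*(T*T)) + Hᵀ*H*(Hᵀ*H*((T*T)*(T*T)))
        = Hᵀ*H*((1 + Hᵀ*H)*((T*T)*(T*T))) := by
          rw [Matrix.add_mul, Matrix.one_mul, Matrix.mul_add]
      _ = Hᵀ*H*(T*T) := by
          rw [← hSq, ← Matrix.mul_assoc (Sq*Sq) (T*T) (T*T), hSS, Matrix.one_mul]
  have trA : Matrix.trace ((Hᵀ*H*T)ᵀ * (Hᵀ*H*T)) = Matrix.trace (Hᵀ*H*(Hᵀ*H*(T*T))) := by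
    rw [transpose_mul, hTsymm, transpose_mul, transpose_transpose]
    simp only [Matrix.mul_assoc]
    rw [Matrix.trace_mul_comm]
    simp only [Matrix.mul_assoc]
  have trB : Matrix.trace ((Hᵀ*H*(T*T))ᵀ * (Hᵀ*H*(T*T))) =
      Matrix.trace (Hᵀ*H*(Hᵀ*H*((T*T)*(T*T)))) := by
    rw [transpose_mul, transpose_mul, hTsymm, transpose_mul, transpose_transpose]
    simp only [Matrix.mul_assoc]
    rw [Matrix.trace_mul_comm]
    simp only [Matrix.mul_assoc]
    rw [Matrix.trace_mul_comm]
    simp only [Matrix.mul_assoc]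
  have trN : Matrix.trace ((H*(T*T))ᵀ * (H*(T*T))) = Matrix.trace (Hᵀ*H*((T*T)*(T*T))) := by
    rw [transpose_mul, transpose_mul, hTsymm]
    simp only [Matrix.mul_assoc]
    rw [Matrix.trace_mul_comm]
    simp only [Matrix.mul_assoc]
    rw [Matrix.trace_mul_comm]
    simp only [Matrix.mul_assoc]
  have hfrobN : frob (H * (T * T)) ≤ frob H := by
    have e1 : Matrix.trace (Hᵀ*H*(T*T)) + Matrix.trace ((Hᵀ*H*T)ᵀ*(Hᵀ*H*T))
        = Matrix.trace (Hᵀ*H) := by rw [trA, ← Matrix.trace_add, key1]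
    have e2 : Matrix.trace (Hᵀ*H*((T*T)*(T*T))) + Matrix.trace ((Hᵀ*H*(T*T))ᵀ*(Hᵀ*H*(T*T)))
        = Matrix.trace (Hᵀ*H*(T*T)) := by rw [trB, ← Matrix.trace_add, key2]
    have pos1 := tr_nonneg (Hᵀ*H*T)
    have pos2 := tr_nonneg (Hᵀ*H*(T*T))
    refine frob_le_of_trace_le ?_
    rw [trN]
    linarith
  have hN_le : frob (H * (T * T)) ≤ α := le_trans hfrobN hH
  -- frob of W * N
  have hWW : (U2 - U1*Hᵀ)ᵀ * (U2 - U1*Hᵀ) = 1 + H * Hᵀ := by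
    rw [transpose_sub, transpose_mul, transpose_transpose]
    simp only [Matrix.sub_mul, Matrix.mul_sub]
    rw [hU2, ← Matrix.mul_assoc U2ᵀ U1 Hᵀ, hU21, Matrix.zero_mul,
      Matrix.mul_assoc H U1ᵀ U2, hU12, Matrix.mul_zero,
      Matrix.mul_assoc H U1ᵀ (U1*Hᵀ), ← Matrix.mul_assoc U1ᵀ U1 Hᵀ, hU1, Matrix.one_mul]
    abel
  have hWN_sq : frob ((U2 - U1*Hᵀ) * (H*(T*T))) ^ 2
      = frob (H*(T*T)) ^ 2 + frob (Hᵀ*(H*(T*T))) ^ 2 := by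
    rw [frob_sq, frob_sq, frob_sq, transpose_mul]
    calc Matrix.trace ((H*(T*T))ᵀ * (U2 - U1*Hᵀ)ᵀ * ((U2 - U1*Hᵀ) * (H*(T*T))))
        = Matrix.trace ((H*(T*T))ᵀ * (((U2 - U1*Hᵀ)ᵀ * (U2 - U1*Hᵀ)) * (H*(T*T)))) := by
          simp only [Matrix.mul_assoc]
      _ = Matrix.trace ((H*(T*T))ᵀ * ((1 + H*Hᵀ) * (H*(T*T)))) := by rw [hWW]
      _ = _ := by
          rw [Matrix.add_mul, Matrix.one_mul, Matrix.mul_add, Matrix.trace_add]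
          congr 1
          simp only [transpose_mul, transpose_transpose, hTsymm, Matrix.mul_assoc]
  have hHN : frob (Hᵀ*(H*(T*T))) ≤ α * α := by
    have h1 : frob (Hᵀ*(H*(T*T))) ≤ frob H * frob (H*(T*T)) := by
      have h2 := frob_mul_le_s14 Hᵀ (H*(T*T))
      rwa [frob_transpose_s14] at h2
    exact le_trans h1 (mul_le_mul hH hN_le (frob_nonneg_s14 _) hα0)
  have hWN : frob ((U2 - U1*Hᵀ) * (H*(T*T))) ≤ α * (1 + α^2) := by
    have hsq : frob ((U2 - U1*Hᵀ) * (H*(T*T))) ^ 2 ≤ (α * (1 + α^2)) ^ 2 := by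
      rw [hWN_sq]
      have hb2 : frob (H*(T*T))^2 ≤ α^2 := pow_le_pow_left₀ (frob_nonneg_s14 _) hN_le 2
      have hc2 : frob (Hᵀ*(H*(T*T)))^2 ≤ (α*α)^2 := pow_le_pow_left₀ (frob_nonneg_s14 _) hHN 2
      nlinarith [hb2, hc2, sq_nonneg α, sq_nonneg (α^2), pow_nonneg hα0 4, pow_nonneg hα0 6]
    calc frob ((U2 - U1*Hᵀ) * (H*(T*T)))
        = Real.sqrt (frob ((U2 - U1*Hᵀ) * (H*(T*T))) ^ 2) := by
          rw [Real.sqrt_sq (frob_nonneg_s14 _)]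
      _ ≤ Real.sqrt ((α * (1 + α^2)) ^ 2) := Real.sqrt_le_sqrt hsq
      _ = α * (1 + α^2) := Real.sqrt_sq (by positivity)
  -- assemble
  rw [hE]
  have tri : frob (-((U2 - U1*Hᵀ) * (H*(T*T)) * Matrix.diagonal σ * Vᵀ) + (1 - Q*Qᵀ) * Φ)
      ≤ frob ((U2 - U1*Hᵀ) * (H*(T*T)) * Matrix.diagonal σ * Vᵀ) + frob ((1 - Q*Qᵀ) * Φ) := by
    rw [frob_eq_norm_s14, frob_eq_norm_s14, frob_eq_norm_s14]
    calc ‖-((U2 - U1*Hᵀ) * (H*(T*T)) * Matrix.diagonal σ * Vᵀ) + (1 - Q*Qᵀ) * Φ‖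
        ≤ ‖-((U2 - U1*Hᵀ) * (H*(T*T)) * Matrix.diagonal σ * Vᵀ)‖ + ‖(1 - Q*Qᵀ) * Φ‖ :=
          norm_add_le _ _
      _ = _ := by rw [norm_neg]
  have b1 : frob ((U2 - U1*Hᵀ) * (H*(T*T)) * Matrix.diagonal σ * Vᵀ)
      = frob ((U2 - U1*Hᵀ) * (H*(T*T)) * Matrix.diagonal σ) := frob_mul_orth _ V hV
  have b2 : frob ((U2 - U1*Hᵀ) * (H*(T*T)) * Matrix.diagonal σ)
      ≤ σ1 * frob ((U2 - U1*Hᵀ) * (H*(T*T))) :=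
    frob_mul_diagonal_le _ σ σ1 hσ1pos.le hσ0 hσ1ub
  have b3 : frob ((1 - Q*Qᵀ) * Φ) ≤ ε := le_trans (frob_proj_le Q hQQ Φ) hΦ
  have b4 : σ1 * frob ((U2 - U1*Hᵀ) * (H*(T*T))) ≤ σ1 * (α * (1 + α^2)) :=
    mul_le_mul_of_nonneg_left hWN hσ1pos.le
  have harith : σ1 * (α * (1 + α^2)) + ε = (1 + 4 * (1 + α^2) * (σ1/σd)) * ε := by
    rw [hα]
    field_simp
    ring
  linarith
end Main
end
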